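/- arXiv:2604.08234 — 10 statements merged into one kernel-verified Lean document; each statement's English description precedes it below -/
import Mathlib

section
/- Let 𝓘 = (I_1,…,I_t) be a sequence of coloring channels over Σ = [q] that is separable with witnessing set ∅ ⊂ S ⊂ [t], and set 𝓘₁ = (I_i)_{i∈S}, 𝓘₂ = (I_i)_{i∉S}. Then cap(𝓘) = max{ cap(𝓘₁), cap(𝓘₂) }. -/
/-!
Restricting to a part of the channels can only merge outputs, so each part has capacity at most
`cap 𝓘`. Conversely, as the two parts read disjoint sets of letters, the outputs of `x` are the
outputs of the first part on the subsequence of letters it reads, of some length `k`, together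
with those of the second part on the remaining `n - k` letters. Hence
`|A_𝓘(n)| ≤ ∑ₖ |A_𝓘₁(k)| |A_𝓘₂(n - k)| ≤ (n + 1) C q^{rn}` for every `r > max (cap 𝓘₁) (cap 𝓘₂)`,
and the polynomial factor `n + 1` is invisible at exponential scale.
-/

/-- The output of a single coloring channel `I`: the subsequence of `x`
consisting (in order) of the letters of `x` that belong to `I`. -/
def channelOutput {q : ℕ} (I : Finset (Fin q)) (x : List (Fin q)) : List (Fin q) :=
  x.filter (fun a => a ∈ I)

/-- The set `A_𝓘(n)` of all tuples of channel outputs over inputs of length `n`. -/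
def channelOutputs {q : ℕ} {ι : Type} (𝓘 : ι → Finset (Fin q)) (n : ℕ) :
    Set (ι → List (Fin q)) :=
  { y | ∃ x : List (Fin q), x.length = n ∧ y = fun i => channelOutput (𝓘 i) x }

/-- The capacity of a sequence of coloring channels:
`limsup_{n→∞} (1/n) log_q |A_𝓘(n)|`. -/
noncomputable def capacity {q : ℕ} {ι : Type} (𝓘 : ι → Finset (Fin q)) : ℝ :=
  Filter.atTop.limsup fun n : ℕ =>
    Real.logb q ((channelOutputs 𝓘 n).ncard : ℝ) / (n : ℝ)

/-- The binary entropy function (with `H(0) = H(1) = 0`). -/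
noncomputable def binH (x : ℝ) : ℝ :=
  -(x * Real.logb 2 x) - (1 - x) * Real.logb 2 (1 - x)

open Filter Real Set Topology

/-- `capacity 𝓘` is, by definition, `growthRate q` of the counts `|A_𝓘(n)|`. -/
noncomputable def growthRate (b : ℝ) (a : ℕ → ℕ) : ℝ :=
  atTop.limsup fun n => logb b (a n) / n

section GrowthRate

variable {b : ℝ} {a c d : ℕ → ℕ}

lemma logb_natCast_nonneg (hb : 1 < b) (m : ℕ) : 0 ≤ logb b m :=
  div_nonneg (log_natCast_nonneg m) (log_nonneg hb.le)

lemma logb_natCast_le_logb (hb : 1 < b) {m : ℕ} {x : ℝ} (hmx : (m : ℝ) ≤ x)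
    (hx : 0 ≤ logb b x) : logb b m ≤ logb b x := by
  rcases m.eq_zero_or_pos with rfl | hm
  · simpa using hx
  · exact logb_le_logb_of_le hb (by exact_mod_cast hm) hmx

lemma tendsto_logb_natCast_add_one_div_atTop (b : ℝ) :
    Tendsto (fun n : ℕ => logb b (n + 1) / n) atTop (𝓝 0) := by
  have h := ((tendsto_pow_log_div_mul_add_atTop 1 (-1) 1 one_ne_zero).comp
    (tendsto_atTop_add_const_right _ 1 tendsto_natCast_atTop_atTop)).div_const (log b)
  rw [zero_div] at h
  refine h.congr fun n => ?_
  simp only [Function.comp_apply, pow_one, one_mul, add_neg_cancel_right, logb]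
  ring

lemma isCoboundedUnder_logb_div (hb : 1 < b) (a : ℕ → ℕ) :
    IsCoboundedUnder (· ≤ ·) atTop fun n => logb b (a n) / n :=
  isCoboundedUnder_le_of_le atTop fun n => div_nonneg (logb_natCast_nonneg hb _) n.cast_nonneg

lemma isBoundedUnder_logb_div (hb : 1 < b) {k : ℕ} (ha : ∀ n, a n ≤ k ^ n) :
    IsBoundedUnder (· ≤ ·) atTop fun n => logb b (a n) / n := by
  refine isBoundedUnder_of ⟨logb b k, fun n => ?_⟩
  rcases n.eq_zero_or_pos with rfl | hn
  · simpa using logb_natCast_nonneg hb k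
  rw [div_le_iff₀ (by exact_mod_cast hn), mul_comm, ← logb_pow]
  exact logb_natCast_le_logb hb (by exact_mod_cast ha n)
    (by exact_mod_cast logb_natCast_nonneg hb (k ^ n))

lemma growthRate_nonneg (hb : 1 < b) {k : ℕ} (ha : ∀ n, a n ≤ k ^ n) : 0 ≤ growthRate b a :=
  le_limsup_of_frequently_le
    (Frequently.of_forall fun n => div_nonneg (logb_natCast_nonneg hb _) n.cast_nonneg)
    (isBoundedUnder_logb_div hb ha)

lemma growthRate_mono (hb : 1 < b) {k : ℕ} (hac : ∀ n, a n ≤ c n) (hc : ∀ n, c n ≤ k ^ n) :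
    growthRate b a ≤ growthRate b c :=
  limsup_le_limsup
    (Eventually.of_forall fun n => div_le_div_of_nonneg_right
      (logb_natCast_le_logb hb (by exact_mod_cast hac n) (logb_natCast_nonneg hb _)) n.cast_nonneg)
    (isCoboundedUnder_logb_div hb a) (isBoundedUnder_logb_div hb hc)

lemma exists_le_mul_rpow_of_growthRate_lt (hb : 1 < b) {k : ℕ} (ha : ∀ n, a n ≤ k ^ n) {r : ℝ}
    (hr : growthRate b a < r) : ∃ C ≥ 1, ∀ n, (a n : ℝ) ≤ C * b ^ (r * n) := by
  obtain ⟨N, hN⟩ :=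
    eventually_atTop.1 (eventually_lt_of_limsup_lt hr (isBoundedUnder_logb_div hb ha))
  have hr0 : 0 ≤ r := (growthRate_nonneg hb ha).trans hr.le
  set C : ℝ := 1 + ∑ m ∈ Finset.range (N + 1), (a m : ℝ)
  have hC : 1 ≤ C := le_add_of_nonneg_right (Finset.sum_nonneg fun _ _ => Nat.cast_nonneg _)
  refine ⟨C, hC, fun n => ?_⟩
  have hpow : 1 ≤ b ^ (r * n) := one_le_rpow hb.le (by positivity)
  rcases lt_or_ge n (N + 1) with hn | hn
  · calc (a n : ℝ) ≤ ∑ m ∈ Finset.range (N + 1), (a m : ℝ) :=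
          Finset.single_le_sum (fun _ _ => Nat.cast_nonneg _) (Finset.mem_range.2 hn)
      _ ≤ C := le_add_of_nonneg_left zero_le_one
      _ ≤ C * b ^ (r * n) := le_mul_of_one_le_right (by positivity) hpow
  · have hlt : logb b (a n) < r * n := by
      rw [← div_lt_iff₀ (by exact_mod_cast (by omega : 0 < n))]
      exact hN n (by omega)
    have hab : (a n : ℝ) ≤ b ^ (r * n) := by
      rcases (a n).eq_zero_or_pos with h | h
      · rw [h, Nat.cast_zero]
        positivity
      · exact ((logb_lt_iff_lt_rpow hb (by exact_mod_cast h)).1 hlt).le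
    exact hab.trans (le_mul_of_one_le_left (by positivity) hC)

lemma growthRate_le_of_le_mul_rpow (hb : 1 < b) {C r : ℝ} (hC : 1 ≤ C) (hr : 0 ≤ r)
    (hc : ∀ n, (c n : ℝ) ≤ (n + 1) * C * b ^ (r * n)) : growthRate b c ≤ r := by
  set w : ℕ → ℝ := fun n => logb b (n + 1) / n + logb b C / n + r
  have hw : Tendsto w atTop (𝓝 r) := by
    simpa using ((tendsto_logb_natCast_add_one_div_atTop b).add
      (tendsto_const_div_atTop_nhds_zero_nat (logb b C))).add_const r
  have hcw : ∀ n, logb b (c n) / n ≤ w n := by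
    intro n
    rcases n.eq_zero_or_pos with rfl | hn
    · simpa [w] using hr
    have hb0 : 0 < b := by linarith
    have hbound : logb b (c n) ≤ logb b (n + 1) + logb b C + r * n := by
      have hX : 1 ≤ (n + 1 : ℝ) * C * b ^ (r * n) :=
        one_le_mul_of_one_le_of_one_le (one_le_mul_of_one_le_of_one_le (by simp) hC)
          (one_le_rpow hb.le (by positivity))
      have h := logb_natCast_le_logb hb (hc n) (logb_nonneg hb hX)
      rwa [logb_mul (by positivity) (by positivity), logb_mul (by positivity) (by positivity),
        logb_rpow hb0 hb.ne'] at h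
    have hn' : (0 : ℝ) < n := by exact_mod_cast hn
    calc logb b (c n) / n ≤ (logb b (n + 1) + logb b C + r * n) / n :=
          div_le_div_of_nonneg_right hbound hn'.le
      _ = w n := by simp only [w]; field_simp
  calc growthRate b c ≤ atTop.limsup w :=
        limsup_le_limsup (Eventually.of_forall hcw) (isCoboundedUnder_logb_div hb c)
          hw.isBoundedUnder_le
    _ = r := hw.limsup_eq

lemma growthRate_le_max_of_le_sum_mul (hb : 1 < b) {k : ℕ} (ha : ∀ n, a n ≤ k ^ n)
    (hd : ∀ n, d n ≤ k ^ n) (hc : ∀ n, c n ≤ ∑ i ∈ Finset.range (n + 1), a i * d (n - i)) :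
    growthRate b c ≤ max (growthRate b a) (growthRate b d) := by
  refine le_of_forall_gt_imp_ge_of_dense fun r hr => ?_
  obtain ⟨C₁, hC₁, h₁⟩ := exists_le_mul_rpow_of_growthRate_lt hb ha ((le_max_left _ _).trans_lt hr)
  obtain ⟨C₂, hC₂, h₂⟩ := exists_le_mul_rpow_of_growthRate_lt hb hd ((le_max_right _ _).trans_lt hr)
  have hr0 : 0 ≤ r := (growthRate_nonneg hb ha).trans ((le_max_left _ _).trans hr.le)
  refine growthRate_le_of_le_mul_rpow hb (one_le_mul_of_one_le_of_one_le hC₁ hC₂) hr0 fun n => ?_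
  have hterm : ∀ i ∈ Finset.range (n + 1), (a i : ℝ) * d (n - i) ≤ C₁ * C₂ * b ^ (r * n) := by
    intro i hi
    have hin : i ≤ n := Nat.lt_succ_iff.1 (Finset.mem_range.1 hi)
    have hsplit : b ^ (r * i) * b ^ (r * (n - i : ℕ)) = b ^ (r * n) := by
      rw [← rpow_add (by linarith), Nat.cast_sub hin, ← mul_add, add_sub_cancel]
    calc (a i : ℝ) * d (n - i) ≤ C₁ * b ^ (r * i) * (C₂ * b ^ (r * (n - i : ℕ))) :=
          mul_le_mul (h₁ i) (h₂ (n - i)) (Nat.cast_nonneg _) (by positivity)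
      _ = C₁ * C₂ * b ^ (r * n) := by rw [← hsplit]; ring
  calc (c n : ℝ) ≤ ∑ i ∈ Finset.range (n + 1), (a i : ℝ) * d (n - i) := by exact_mod_cast hc n
    _ ≤ ∑ _i ∈ Finset.range (n + 1), C₁ * C₂ * b ^ (r * n) := Finset.sum_le_sum hterm
    _ = (n + 1) * (C₁ * C₂) * b ^ (r * n) := by simp only [Finset.sum_const, Finset.card_range,
          nsmul_eq_mul, Nat.cast_add, Nat.cast_one]; ring

end GrowthRate

section Channels

variable {q : ℕ} {ι ι₁ ι₂ : Type}

lemma channelOutputs_eq_image (𝓘 : ι → Finset (Fin q)) (n : ℕ) :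
    channelOutputs 𝓘 n = (fun x i => channelOutput (𝓘 i) x) '' {x | x.length = n} := by
  ext y
  exact ⟨fun ⟨x, hx, hy⟩ => ⟨x, hx, hy.symm⟩, fun ⟨x, hx, hy⟩ => ⟨x, hx, hy.symm⟩⟩

lemma channelOutputs_finite (𝓘 : ι → Finset (Fin q)) (n : ℕ) : (channelOutputs 𝓘 n).Finite := by
  rw [channelOutputs_eq_image]
  exact (List.finite_length_eq _ n).image _

lemma ncard_channelOutputs_le (𝓘 : ι → Finset (Fin q)) (n : ℕ) :
    (channelOutputs 𝓘 n).ncard ≤ q ^ n := by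
  have hwords : {x : List (Fin q) | x.length = n}.ncard = q ^ n := by
    rw [← Nat.card_coe_set_eq]
    change Nat.card (List.Vector (Fin q) n) = q ^ n
    rw [Nat.card_eq_fintype_card, card_vector, Fintype.card_fin]
  rw [channelOutputs_eq_image, ← hwords]
  exact ncard_image_le (List.finite_length_eq _ n)

lemma channelOutputs_comp (𝓘 : ι → Finset (Fin q)) (e : ι₁ → ι) (n : ℕ) :
    channelOutputs (𝓘 ∘ e) n = (· ∘ e) '' channelOutputs 𝓘 n := by
  rw [channelOutputs_eq_image, channelOutputs_eq_image, ← image_comp]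
  rfl

lemma channelOutput_filter_of_subset {I L : Finset (Fin q)} (hI : I ⊆ L) (x : List (Fin q)) :
    channelOutput I (x.filter (· ∈ L)) = channelOutput I x := by
  simp only [channelOutput, List.filter_filter]
  refine List.filter_congr fun a _ => ?_
  by_cases h : a ∈ I
  · simp [h, hI h]
  · simp [h]

lemma channelOutput_filter_of_disjoint {I L : Finset (Fin q)} (hI : Disjoint I L)
    (x : List (Fin q)) : channelOutput I (x.filter (· ∉ L)) = channelOutput I x := by
  simp only [channelOutput, List.filter_filter]
  refine List.filter_congr fun a _ => ?_
  by_cases h : a ∈ I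
  · simp [h, Finset.disjoint_left.1 hI h]
  · simp [h]

lemma ncard_channelOutputs_le_sum_mul (𝓘 : ι → Finset (Fin q)) (e₁ : ι₁ → ι) (e₂ : ι₂ → ι)
    (he : ∀ i, i ∈ range e₁ ∨ i ∈ range e₂) (L : Finset (Fin q)) (h₁ : ∀ j, 𝓘 (e₁ j) ⊆ L)
    (h₂ : ∀ j, Disjoint (𝓘 (e₂ j)) L) (n : ℕ) :
    (channelOutputs 𝓘 n).ncard ≤ ∑ k ∈ Finset.range (n + 1),
      (channelOutputs (𝓘 ∘ e₁) k).ncard * (channelOutputs (𝓘 ∘ e₂) (n - k)).ncard := by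
  set Φ : (ι → List (Fin q)) → (ι₁ → List (Fin q)) × (ι₂ → List (Fin q)) :=
    fun y => (y ∘ e₁, y ∘ e₂)
  have hΦ : Function.Injective Φ := by
    intro y z h
    funext i
    rcases he i with ⟨j, rfl⟩ | ⟨j, rfl⟩
    · exact congrFun (congrArg Prod.fst h) j
    · exact congrFun (congrArg Prod.snd h) j
  have hmaps : ∀ y ∈ channelOutputs 𝓘 n, Φ y ∈ ⋃ k ∈ Finset.range (n + 1),
      channelOutputs (𝓘 ∘ e₁) k ×ˢ channelOutputs (𝓘 ∘ e₂) (n - k) := by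
    rintro _ ⟨x, rfl, rfl⟩
    have hlen := List.length_eq_length_filter_add (l := x) (· ∈ L)
    refine mem_iUnion₂.2 ⟨(x.filter (· ∈ L)).length, Finset.mem_range.2 (by omega),
      ⟨x.filter (· ∈ L), rfl, ?_⟩, ⟨x.filter (· ∉ L), ?_, ?_⟩⟩
    · exact funext fun j => (channelOutput_filter_of_subset (h₁ j) x).symm
    · simp only [decide_not] at hlen ⊢
      omega
    · exact funext fun j => (channelOutput_filter_of_disjoint (h₂ j) x).symm
  calc (channelOutputs 𝓘 n).ncard
      ≤ (⋃ k ∈ Finset.range (n + 1),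
          channelOutputs (𝓘 ∘ e₁) k ×ˢ channelOutputs (𝓘 ∘ e₂) (n - k)).ncard :=
        ncard_le_ncard_of_injOn Φ hmaps hΦ.injOn ((Finset.range (n + 1)).finite_toSet.biUnion
          fun k _ => (channelOutputs_finite _ _).prod (channelOutputs_finite _ _))
    _ ≤ ∑ k ∈ Finset.range (n + 1),
          (channelOutputs (𝓘 ∘ e₁) k ×ˢ channelOutputs (𝓘 ∘ e₂) (n - k)).ncard :=
        Finset.set_ncard_biUnion_le _ _
    _ = _ := by simp only [ncard_prod]

lemma capacity_comp_le (hq : 1 < q) (𝓘 : ι → Finset (Fin q)) (e : ι₁ → ι) :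
    capacity (𝓘 ∘ e) ≤ capacity 𝓘 :=
  growthRate_mono (by exact_mod_cast hq)
    (fun n => by rw [channelOutputs_comp]; exact ncard_image_le (channelOutputs_finite 𝓘 n))
    (ncard_channelOutputs_le 𝓘)

lemma capacity_le_max_of_separated (hq : 1 < q) (𝓘 : ι → Finset (Fin q)) (e₁ : ι₁ → ι)
    (e₂ : ι₂ → ι) (he : ∀ i, i ∈ range e₁ ∨ i ∈ range e₂) (L : Finset (Fin q))
    (h₁ : ∀ j, 𝓘 (e₁ j) ⊆ L) (h₂ : ∀ j, Disjoint (𝓘 (e₂ j)) L) :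
    capacity 𝓘 ≤ max (capacity (𝓘 ∘ e₁)) (capacity (𝓘 ∘ e₂)) :=
  growthRate_le_max_of_le_sum_mul (by exact_mod_cast hq) (ncard_channelOutputs_le _)
    (ncard_channelOutputs_le _) (ncard_channelOutputs_le_sum_mul 𝓘 e₁ e₂ he L h₁ h₂)

end Channels

theorem capacity_of_separable_general (q t : ℕ) (hq : 2 ≤ q)
    (𝓘 : Fin t → Finset (Fin q))
    (S : Finset (Fin t))
    (hsep : (S.biUnion 𝓘) ∩ (Sᶜ.biUnion 𝓘) = ∅) :
    capacity 𝓘 =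
      max (capacity fun i : {i // i ∈ S} => 𝓘 i.1)
          (capacity fun i : {i // i ∈ Sᶜ} => 𝓘 i.1) := by
  have hdisj : Disjoint (S.biUnion 𝓘) (Sᶜ.biUnion 𝓘) := Finset.disjoint_iff_inter_eq_empty.2 hsep
  refine le_antisymm ?_ (max_le (capacity_comp_le hq 𝓘 _) (capacity_comp_le hq 𝓘 _))
  refine capacity_le_max_of_separated hq 𝓘 Subtype.val Subtype.val (fun i => ?_) (S.biUnion 𝓘)
    (fun j => Finset.subset_biUnion_of_mem 𝓘 j.2)
    (fun j => (hdisj.mono_right (Finset.subset_biUnion_of_mem 𝓘 j.2)).symm)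
  by_cases hi : i ∈ S
  · exact Or.inl ⟨⟨i, hi⟩, rfl⟩
  · exact Or.inr ⟨⟨i, Finset.mem_compl.2 hi⟩, rfl⟩

/-- the capacity of a separable sequence of coloring channels is the
maximum of the capacities of the two parts. -/
theorem capacity_of_separable (q t : ℕ) (hq : 2 ≤ q)
    (𝓘 : Fin t → Finset (Fin q)) (hne : ∀ i, (𝓘 i).Nonempty)
    (S : Finset (Fin t)) (hS : S.Nonempty) (hS' : S ≠ Finset.univ)
    (hsep : (S.biUnion 𝓘) ∩ (Sᶜ.biUnion 𝓘) = ∅) :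
    capacity 𝓘 =
      max (capacity fun i : {i // i ∈ S} => 𝓘 i.1)
          (capacity fun i : {i // i ∈ Sᶜ} => 𝓘 i.1) :=
  capacity_of_separable_general q t hq 𝓘 S hsep
end

section
/- Fix integers k,p,t ≥ 1 and q ≥ 2, and define g(y) = (1−y) log_q k + y log_q p + (t−(t−1)y) H( y/(t−(t−1)y) ) log_q 2 on (0,1). Then g is twice differentiable on (0,1) with g''(y) = − t / ( ln q · y (1−y)(t−(t−1)y) ) < 0 for all y ∈ (0,1), and there exists a unique y* ∈ (0,1) such that p·t·(1−y*)^t = k·y*·(1−(t−1)y*/t)^{t−1}; at this y*, g attains its maximum over (0,1). -/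
/-! With `s = t - (t - 1) y` one has `1 - y / s = t (1 - y) / s`, so `ln q · g` is an explicit
sum of `x ln x` terms. Its derivative `ln p - ln k - ln y + t ln (1 - y) + t ln t - (t - 1) ln s`
is the logarithm of the ratio of the two sides of the critical equation, and differentiating once
more gives `-t / (y (1 - y) s) < 0`. Hence `g` is strictly concave, the critical equation has a
root by the intermediate value theorem and at most one since `g'` is strictly decreasing, and a
critical point of a concave function is a global maximum. -/

open Real Set Filter

theorem ConcaveOn.isMaxOn_of_hasDerivAt_eq_zero {S : Set ℝ} {f : ℝ → ℝ} {c : ℝ}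
    (hf : ConcaveOn ℝ S f) (hc : c ∈ S) (hd : HasDerivAt f 0 c) : IsMaxOn f S c := by
  refine isMaxOn_iff.2 fun y hy => ?_
  rcases lt_trichotomy y c with hyc | rfl | hcy
  · have := hf.le_slope_of_hasDerivAt hy hc hyc hd
    rw [slope_def_field, le_div_iff₀ (sub_pos.2 hyc)] at this
    linarith
  · exact le_rfl
  · have := hf.slope_le_of_hasDerivAt hc hy hcy hd
    rw [slope_def_field, div_le_iff₀ (sub_pos.2 hcy)] at this
    linarith

lemma sub_sub_one_mul_pos {t y : ℝ} (ht : 0 ≤ t) (hy : y ∈ Ioo (0 : ℝ) 1) :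
    0 < t - (t - 1) * y := by
  nlinarith [hy.1, hy.2]

lemma mul_one_sub_mul_sub_sub_one_mul_pos {t y : ℝ} (ht : 0 ≤ t) (hy : y ∈ Ioo (0 : ℝ) 1) :
    0 < y * (1 - y) * (t - (t - 1) * y) :=
  mul_pos (mul_pos hy.1 (sub_pos.2 hy.2)) (sub_sub_one_mul_pos ht hy)

/-- `ln q · g(y)` with the entropy term expanded into natural logarithms. -/
noncomputable def sunflowerObjective (k p t y : ℝ) : ℝ :=
  (1 - y) * log k + y * log p - y * log y - t * (1 - y) * log (1 - y) - t * (1 - y) * log t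
    + (t - (t - 1) * y) * log (t - (t - 1) * y)

noncomputable def sunflowerObjectiveDeriv (k p t y : ℝ) : ℝ :=
  log p - log k - log y + t * log (1 - y) + t * log t - (t - 1) * log (t - (t - 1) * y)

lemma logb_sunflower_eq {q k p t y : ℝ} (ht : 0 < t) (hy : y ∈ Ioo (0 : ℝ) 1) :
    (1 - y) * logb q k + y * logb q p + (t - (t - 1) * y) * binH (y / (t - (t - 1) * y)) * logb q 2
      = sunflowerObjective k p t y / log q := by
  have hy0 : 0 < y := hy.1
  have h1y : 0 < 1 - y := sub_pos.2 hy.2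
  have hs := sub_sub_one_mul_pos ht.le hy
  set s := t - (t - 1) * y with hs_def
  have h1x : 1 - y / s = t * (1 - y) / s := by field_simp; rw [hs_def]; ring
  have hlog2 : log 2 ≠ 0 := (log_pos one_lt_two).ne'
  unfold binH logb sunflowerObjective
  rw [h1x, log_div hy0.ne' hs.ne', log_div (by positivity) hs.ne', log_mul ht.ne' h1y.ne', ← hs_def]
  field_simp
  ring

lemma hasDerivAt_sunflowerObjective (k p : ℝ) {t y : ℝ} (ht : 0 ≤ t) (hy : y ∈ Ioo (0 : ℝ) 1) :
    HasDerivAt (sunflowerObjective k p t) (sunflowerObjectiveDeriv k p t y) y := by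
  have h1y : 1 - y ≠ 0 := (sub_pos.2 hy.2).ne'
  have hs := (sub_sub_one_mul_pos ht hy).ne'
  have hlin : HasDerivAt (fun y : ℝ => 1 - y) (-1) y := by
    simpa using (hasDerivAt_id y).const_sub 1
  have hslin : HasDerivAt (fun y : ℝ => t - (t - 1) * y) (-(t - 1)) y := by
    simpa using ((hasDerivAt_id y).const_mul (t - 1)).const_sub t
  have hylog := hasDerivAt_mul_log hy.1.ne'
  have h1ylog := (hasDerivAt_mul_log h1y).comp y hlin
  have hslog := (hasDerivAt_mul_log hs).comp y hslin
  have := ((((hlin.mul_const (log k)).add ((hasDerivAt_id y).mul_const (log p))).sub hylog).sub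
    (h1ylog.const_mul t)).sub ((hlin.const_mul t).mul_const (log t)) |>.add hslog
  refine (this.congr_deriv ?_).congr_of_eventuallyEq (.of_forall fun z => ?_)
  · simp only [sunflowerObjectiveDeriv]
    ring
  · simp only [sunflowerObjective, Pi.add_apply, Pi.sub_apply, Function.comp_apply, id]
    ring

lemma hasDerivAt_sunflowerObjectiveDeriv (k p : ℝ) {t y : ℝ} (ht : 0 ≤ t)
    (hy : y ∈ Ioo (0 : ℝ) 1) :
    HasDerivAt (sunflowerObjectiveDeriv k p t) (-(t / (y * (1 - y) * (t - (t - 1) * y)))) y := by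
  have hy0 := hy.1.ne'
  have h1y : 1 - y ≠ 0 := (sub_pos.2 hy.2).ne'
  have hs := (sub_sub_one_mul_pos ht hy).ne'
  have hlin : HasDerivAt (fun y : ℝ => 1 - y) (-1) y := by
    simpa using (hasDerivAt_id y).const_sub 1
  have hslin : HasDerivAt (fun y : ℝ => t - (t - 1) * y) (-(t - 1)) y := by
    simpa using ((hasDerivAt_id y).const_mul (t - 1)).const_sub t
  have := ((((hasDerivAt_const y (log p - log k)).sub (hasDerivAt_log hy0)).add
    (((hasDerivAt_log h1y).comp y hlin).const_mul t)).add (hasDerivAt_const y (t * log t))).sub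
    (((hasDerivAt_log hs).comp y hslin).const_mul (t - 1))
  refine this.congr_deriv ?_
  generalize hS : t - (t - 1) * y = s at hs ⊢
  field_simp
  rw [← hS]
  ring

lemma strictAntiOn_sunflowerObjectiveDeriv (k p : ℝ) {t : ℝ} (ht : 0 < t) :
    StrictAntiOn (sunflowerObjectiveDeriv k p t) (Ioo 0 1) := by
  refine strictAntiOn_of_hasDerivWithinAt_neg (convex_Ioo 0 1)
    (fun y hy => (hasDerivAt_sunflowerObjectiveDeriv k p ht.le hy).continuousAt.continuousWithinAt)
    (fun y hy => (hasDerivAt_sunflowerObjectiveDeriv k p ht.le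
      (interior_subset hy)).hasDerivWithinAt) fun y hy => ?_
  rw [interior_Ioo] at hy
  exact neg_neg_of_pos (div_pos ht (mul_one_sub_mul_sub_sub_one_mul_pos ht.le hy))

lemma sunflowerObjectiveDeriv_eq_log_sub_log {k p : ℝ} (hk : 0 < k) (hp : 0 < p) {t : ℕ}
    (ht : 1 ≤ t) {y : ℝ} (hy : y ∈ Ioo (0 : ℝ) 1) :
    sunflowerObjectiveDeriv k p t y =
      log (p * t * (1 - y) ^ t) - log (k * y * (1 - ((t : ℝ) - 1) * y / t) ^ (t - 1)) := by
  have hT : (0 : ℝ) < t := by exact_mod_cast ht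
  have h1y : 0 < 1 - y := sub_pos.2 hy.2
  have hs := sub_sub_one_mul_pos hT.le hy
  have hfrac : 1 - ((t : ℝ) - 1) * y / t = (t - (t - 1) * y) / t := by field_simp
  rw [hfrac, log_mul (mul_pos hp hT).ne' (pow_pos h1y t).ne', log_mul hp.ne' hT.ne',
    log_mul (mul_pos hk hy.1).ne' (pow_pos (div_pos hs hT) _).ne', log_mul hk.ne' hy.1.ne',
    log_pow, log_pow, log_div hs.ne' hT.ne', Nat.cast_sub ht, sunflowerObjectiveDeriv]
  push_cast
  ring

lemma sunflower_critical_iff {k p : ℝ} (hk : 0 < k) (hp : 0 < p) {t : ℕ} (ht : 1 ≤ t) {y : ℝ}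
    (hy : y ∈ Ioo (0 : ℝ) 1) :
    p * t * (1 - y) ^ t = k * y * (1 - ((t : ℝ) - 1) * y / t) ^ (t - 1) ↔
      sunflowerObjectiveDeriv k p t y = 0 := by
  have hT : (0 : ℝ) < t := by exact_mod_cast ht
  have h1y : 0 < 1 - y := sub_pos.2 hy.2
  have hs : 0 < 1 - ((t : ℝ) - 1) * y / t := by
    rw [sub_pos, div_lt_one hT]; nlinarith [hy.1, hy.2]
  have hy0 := hy.1
  have hlhs : 0 < p * t * (1 - y) ^ t := by positivity
  have hrhs : 0 < k * y * (1 - ((t : ℝ) - 1) * y / t) ^ (t - 1) := by positivity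
  rw [sunflowerObjectiveDeriv_eq_log_sub_log hk hp ht hy, sub_eq_zero]
  exact (log_injOn_pos.eq_iff hlhs hrhs).symm

lemma exists_sunflower_critical {k p : ℝ} (hk : 0 < k) (hp : 0 < p) {t : ℕ} (ht : 1 ≤ t) :
    ∃ y ∈ Ioo (0 : ℝ) 1, p * t * (1 - y) ^ t = k * y * (1 - ((t : ℝ) - 1) * y / t) ^ (t - 1) := by
  have hT : (0 : ℝ) < t := by exact_mod_cast ht
  set F : ℝ → ℝ := fun y => p * t * (1 - y) ^ t - k * y * (1 - ((t : ℝ) - 1) * y / t) ^ (t - 1)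
  have hF0 : 0 < F 0 := by simp [F]; positivity
  have hF1 : F 1 < 0 := by
    have h1 : 1 - ((t : ℝ) - 1) * 1 / t = 1 / t := by field_simp; ring
    simp only [F, h1, sub_self, zero_pow (by omega : t ≠ 0), mul_zero, zero_sub, neg_neg_iff_pos]
    positivity
  obtain ⟨y, hy, hFy⟩ := intermediate_value_Ioo' zero_le_one (by fun_prop : Continuous F).continuousOn
    ⟨hF1, hF0⟩
  exact ⟨y, hy, sub_eq_zero.1 hFy⟩

section EqOnIoo

variable {g : ℝ → ℝ} {k p t c : ℝ}

lemma hasDerivAt_of_eqOn_sunflowerObjective_div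
    (hg : EqOn g (fun y => sunflowerObjective k p t y / c) (Ioo 0 1)) (ht : 0 ≤ t) {y : ℝ}
    (hy : y ∈ Ioo (0 : ℝ) 1) : HasDerivAt g (sunflowerObjectiveDeriv k p t y / c) y :=
  ((hasDerivAt_sunflowerObjective k p ht hy).div_const c).congr_of_eventuallyEq
    (eventuallyEq_of_mem (Ioo_mem_nhds hy.1 hy.2) hg)

lemma hasDerivAt_deriv_of_eqOn_sunflowerObjective_div
    (hg : EqOn g (fun y => sunflowerObjective k p t y / c) (Ioo 0 1)) (ht : 0 ≤ t) {y : ℝ}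
    (hy : y ∈ Ioo (0 : ℝ) 1) :
    HasDerivAt (deriv g) (-(t / (c * (y * (1 - y) * (t - (t - 1) * y))))) y := by
  refine ((hasDerivAt_sunflowerObjectiveDeriv k p ht hy).div_const c).congr_deriv
    (by rw [neg_div, div_div, mul_comm c])
    |>.congr_of_eventuallyEq (eventuallyEq_of_mem (Ioo_mem_nhds hy.1 hy.2) fun z hz => ?_)
  exact (hasDerivAt_of_eqOn_sunflowerObjective_div hg ht hz).deriv

end EqOnIoo

/-- properties of the sunflower objective function `g`:
second derivative formula (negative on `(0,1)`), existence and uniqueness of the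
critical point `y*`, and maximality of `g` at `y*`. -/
theorem sunflower_g_properties (q k p t : ℕ) (hq : 2 ≤ q)
    (hk : 1 ≤ k) (hp : 1 ≤ p) (ht : 1 ≤ t)
    (g : ℝ → ℝ)
    (hg : ∀ y : ℝ, g y = (1 - y) * Real.logb q k + y * Real.logb q p +
      ((t : ℝ) - ((t : ℝ) - 1) * y) * binH (y / ((t : ℝ) - ((t : ℝ) - 1) * y)) *
        Real.logb q 2) :
    (∀ y ∈ Set.Ioo (0 : ℝ) 1,
      DifferentiableAt ℝ g y ∧ DifferentiableAt ℝ (deriv g) y ∧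
      deriv (deriv g) y =
        -((t : ℝ) / (Real.log q * (y * (1 - y) * ((t : ℝ) - ((t : ℝ) - 1) * y)))) ∧
      deriv (deriv g) y < 0) ∧
    (∃! ystar : ℝ, ystar ∈ Set.Ioo (0 : ℝ) 1 ∧
      (p : ℝ) * t * (1 - ystar) ^ t =
        (k : ℝ) * ystar * (1 - ((t : ℝ) - 1) * ystar / t) ^ (t - 1)) ∧
    (∀ ystar ∈ Set.Ioo (0 : ℝ) 1,
      (p : ℝ) * t * (1 - ystar) ^ t =
        (k : ℝ) * ystar * (1 - ((t : ℝ) - 1) * ystar / t) ^ (t - 1) →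
      ∀ y ∈ Set.Ioo (0 : ℝ) 1, g y ≤ g ystar) := by
  have hlogq : 0 < log q := log_pos (by exact_mod_cast hq)
  have hT : (0 : ℝ) < t := by exact_mod_cast ht
  have hk0 : (0 : ℝ) < k := by exact_mod_cast hk
  have hp0 : (0 : ℝ) < p := by exact_mod_cast hp
  have hgG : EqOn g (fun y => sunflowerObjective k p t y / log q) (Ioo 0 1) :=
    fun y hy => (hg y).trans (logb_sunflower_eq hT hy)
  have hg' (y : ℝ) (hy : y ∈ Ioo (0 : ℝ) 1) :=
    hasDerivAt_of_eqOn_sunflowerObjective_div hgG hT.le hy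
  have hg'' (y : ℝ) (hy : y ∈ Ioo (0 : ℝ) 1) :=
    hasDerivAt_deriv_of_eqOn_sunflowerObjective_div hgG hT.le hy
  have hg''_neg (y : ℝ) (hy : y ∈ Ioo (0 : ℝ) 1) : deriv (deriv g) y < 0 := by
    rw [(hg'' y hy).deriv]
    exact neg_neg_of_pos
      (div_pos hT (mul_pos hlogq (mul_one_sub_mul_sub_sub_one_mul_pos hT.le hy)))
  have hcrit (y : ℝ) (hy : y ∈ Ioo (0 : ℝ) 1) := sunflower_critical_iff hk0 hp0 ht hy
  refine ⟨fun y hy => ⟨(hg' y hy).differentiableAt, (hg'' y hy).differentiableAt,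
    (hg'' y hy).deriv, hg''_neg y hy⟩, ?_, ?_⟩
  · obtain ⟨y₀, hy₀, heq₀⟩ := exists_sunflower_critical hk0 hp0 ht
    refine ⟨y₀, ⟨hy₀, heq₀⟩, fun y ⟨hy, heq⟩ => ?_⟩
    exact (strictAntiOn_sunflowerObjectiveDeriv k p hT).injOn hy hy₀
      (((hcrit y hy).1 heq).trans ((hcrit y₀ hy₀).1 heq₀).symm)
  · intro ystar hystar heq
    have hconcave : StrictConcaveOn ℝ (Ioo 0 1) g :=
      strictConcaveOn_of_deriv2_neg (convex_Ioo 0 1)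
        (fun y hy => (hg' y hy).continuousAt.continuousWithinAt)
        (fun y hy => hg''_neg y (interior_subset hy))
    have hmax : HasDerivAt g 0 ystar := by
      simpa [(hcrit ystar hystar).1 heq] using hg' ystar hystar
    exact isMaxOn_iff.1 (hconcave.concaveOn.isMaxOn_of_hasDerivAt_eq_zero hystar hmax)
end

section
/- Let 𝓘 = (I_1, I_2) be two coloring channels over Σ = [q] with |I_1 ∩ I_2| = k, |I_1 \ I_2| = p_1, |I_2 \ I_1| = p_2, for integers k, p_1, p_2 ≥ 1. Define M(x_1,x_2) = (1−x_1−x_2) log_q k + x_1 log_q p_1 + x_2 log_q p_2 + (1−x_2) H( x_1/(1−x_2) ) log_q 2 + (1−x_1) H( x_2/(1−x_1) ) log_q 2, and set x_1* = 1/2 − (k+p_2−p_1) / ( 2√((k+p_1+p_2)² − 4p_1p_2) ), x_2* = 1/2 − (k+p_1−p_2) / ( 2√((k+p_1+p_2)² − 4p_1p_2) ). Then cap(𝓘) = M(x_1*, x_2*). -/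
/-!
Call a word over `I1 ∪ I2` reduced if no letter of `I2 \ I1` is immediately followed by a letter
of `I1 \ I2`. Swapping such an adjacent pair does not change `(x_{I1}, x_{I2})`, so every output
pair of an input of length `n` is the output pair of a reduced word of length at most `n`.
Conversely the output pair determines the reduced word: if a reduced word starts with a letter
of `I2 \ I1`, its first letter in `I1` lies in `I1 ∩ I2`, which pins down the first letter.
Hence `|R_n| ≤ |A(n)| ≤ ∑_{m ≤ n} |R_m|` for the set `R_n` of reduced words of length `n`.
Splitting off the first letter gives `|R_{n+2}| = s |R_{n+1}| - p₁ p₂ |R_n|` with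
`s = k + p₁ + p₂`, so `λ^n ≤ |R_n| ≤ (n + 1) λ^n` where `λ ≥ μ ≥ 0` are the roots of
`t² - s t + p₁ p₂`, and the capacity is `log_q λ`. Finally `x_i* = (p_i - μ) / (λ - μ)`, so
`x₁* / (1 - x₂*) = p₁ / λ`, `x₂* / (1 - x₁*) = p₂ / λ` and `(λ - p₁)(λ - p₂) = k λ`, which
collapses `M(x₁*, x₂*)` to `log_q λ`.
-/

open Real Filter Topology Finset

theorem Finset.card_union_eq_card_inter_add_card_sdiff_add_card_sdiff {α : Type*}
    [DecidableEq α] (s t : Finset α) : #(s ∪ t) = #(s ∩ t) + #(s \ t) + #(t \ s) := by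
  have := card_union_add_card_inter s t
  have := card_sdiff_add_card_inter s t
  have := card_sdiff_add_card_inter t s
  rw [inter_comm] at this
  omega

theorem exists_add_eq_mul_eq_sub_eq_sqrt {s a b : ℝ} (h : 0 ≤ s ^ 2 - 4 * a * b) :
    ∃ lam mu : ℝ, lam + mu = s ∧ lam * mu = a * b ∧ lam - mu = √(s ^ 2 - 4 * a * b) :=
  ⟨(s + √(s ^ 2 - 4 * a * b)) / 2, (s - √(s ^ 2 - 4 * a * b)) / 2, by ring,
    by linear_combination -sq_sqrt h / 4, by ring⟩

theorem binH_mul_logb (b : ℝ) {a x : ℝ} (ha : a ≠ 0) :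
    a * binH (x / a) * logb b 2 = -(x * logb b (x / a)) - (a - x) * logb b ((a - x) / a) := by
  have h2 : log 2 ≠ 0 := (log_pos one_lt_two).ne'
  simp only [binH, logb, one_sub_div ha]
  field_simp

theorem entropy_expression_eq_logb (b : ℝ) {K P1 P2 lam mu x1 x2 : ℝ} (hK : K ≠ 0)
    (hP1 : P1 ≠ 0) (hP2 : P2 ≠ 0) (hlam : lam ≠ 0) (hD : lam - mu ≠ 0)
    (hsum : lam + mu = K + P1 + P2) (hprod : lam * mu = P1 * P2)
    (hx1 : x1 = (P1 - mu) / (lam - mu)) (hx2 : x2 = (P2 - mu) / (lam - mu)) :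
    (1 - x1 - x2) * logb b K + x1 * logb b P1 + x2 * logb b P2 +
      (1 - x2) * binH (x1 / (1 - x2)) * logb b 2 +
      (1 - x1) * binH (x2 / (1 - x1)) * logb b 2 = logb b lam := by
  have hroot : (lam - P1) * (lam - P2) = K * lam := by linear_combination lam * hsum - hprod
  have hKlam : K * lam ≠ 0 := mul_ne_zero hK hlam
  have hlamP1 : lam - P1 ≠ 0 := left_ne_zero_of_mul (hroot ▸ hKlam)
  have hlamP2 : lam - P2 ≠ 0 := right_ne_zero_of_mul (hroot ▸ hKlam)
  have h1 : 1 - x1 = (lam - P1) / (lam - mu) := by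
    rw [hx1]; field_simp; ring
  have h2 : 1 - x2 = (lam - P2) / (lam - mu) := by
    rw [hx2]; field_simp; ring
  have h1' : 1 - x1 ≠ 0 := h1 ▸ div_ne_zero hlamP1 hD
  have h2' : 1 - x2 ≠ 0 := h2 ▸ div_ne_zero hlamP2 hD
  have r1 : x1 / (1 - x2) = P1 / lam := by
    rw [hx1, h2]; field_simp; linear_combination -hprod
  have r2 : x2 / (1 - x1) = P2 / lam := by
    rw [hx2, h1]; field_simp; linear_combination -hprod
  have r1' : (1 - x2 - x1) / (1 - x2) = (lam - P1) / lam := by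
    rw [sub_div, div_self h2', r1, one_sub_div hlam]
  have r2' : (1 - x1 - x2) / (1 - x1) = (lam - P2) / lam := by
    rw [sub_div, div_self h1', r2, one_sub_div hlam]
  have hlog : logb b (lam - P1) + logb b (lam - P2) = logb b K + logb b lam := by
    rw [← logb_mul hlamP1 hlamP2, hroot, logb_mul hK hlam]
  rw [binH_mul_logb b h2', binH_mul_logb b h1', r1, r2, r1', r2', logb_div hP1 hlam,
    logb_div hP2 hlam, logb_div hlamP1 hlam, logb_div hlamP2 hlam]
  linear_combination (x1 + x2 - 1) * hlog

section Recurrence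

variable {c : ℕ → ℝ} {lam mu : ℝ}

theorem recurrence_eq_mul_add_pow (h0 : c 0 = 1) (h1 : c 1 = lam + mu)
    (hrec : ∀ n, c (n + 2) = (lam + mu) * c (n + 1) - lam * mu * c n) (n : ℕ) :
    c (n + 1) = lam * c n + mu ^ (n + 1) := by
  induction n with
  | zero => rw [h1, h0]; ring
  | succ n ih => rw [hrec, ih]; ring

theorem pow_le_of_recurrence (h0 : c 0 = 1) (h1 : c 1 = lam + mu)
    (hrec : ∀ n, c (n + 2) = (lam + mu) * c (n + 1) - lam * mu * c n)
    (hlam : 0 ≤ lam) (hmu : 0 ≤ mu) (n : ℕ) : lam ^ n ≤ c n := by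
  induction n with
  | zero => rw [h0, pow_zero]
  | succ n ih =>
    rw [recurrence_eq_mul_add_pow h0 h1 hrec, pow_succ']
    have hc := mul_le_mul_of_nonneg_left ih hlam
    have hpow := pow_nonneg hmu (n + 1)
    linarith

theorem le_succ_mul_pow_of_recurrence (h0 : c 0 = 1) (h1 : c 1 = lam + mu)
    (hrec : ∀ n, c (n + 2) = (lam + mu) * c (n + 1) - lam * mu * c n)
    (hmu : 0 ≤ mu) (hmulam : mu ≤ lam) (n : ℕ) : c n ≤ (n + 1) * lam ^ n := by
  induction n with
  | zero => simp [h0]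
  | succ n ih =>
    rw [recurrence_eq_mul_add_pow h0 h1 hrec]
    have hc := mul_le_mul_of_nonneg_left ih (hmu.trans hmulam)
    have hpow := pow_le_pow_left₀ hmu hmulam (n + 1)
    push_cast
    linear_combination hc + hpow

end Recurrence

theorem tendsto_logb_div_of_pow_le {b lam : ℝ} (hb : 1 < b) (hlam : 0 < lam) (d : ℕ)
    {N : ℕ → ℝ} (hlow : ∀ n, lam ^ n ≤ N n) (hupp : ∀ n, N n ≤ (n + 1) ^ d * lam ^ n) :
    Tendsto (fun n : ℕ => logb b (N n) / n) atTop (𝓝 (logb b lam)) := by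
  have hlog : Tendsto (fun n : ℕ => logb b (n + 1) / n) atTop (𝓝 0) := by
    have h := (tendsto_pow_log_div_mul_add_atTop 1 (-1) 1 one_ne_zero).comp
      (tendsto_atTop_add_const_right atTop 1 tendsto_natCast_atTop_atTop)
    have h' := h.div_const (log b)
    simp only [zero_div] at h'
    refine h'.congr fun n => ?_
    simp [logb, div_right_comm]
  have hupper : Tendsto (fun n : ℕ => logb b lam + d * (logb b (n + 1) / n)) atTop
      (𝓝 (logb b lam)) := by
    simpa using (hlog.const_mul (d : ℝ)).const_add (logb b lam)
  refine tendsto_of_tendsto_of_tendsto_of_le_of_le' tendsto_const_nhds hupper ?_ ?_ <;>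
    filter_upwards [eventually_gt_atTop 0] with n hn <;>
    have hn' : (0 : ℝ) < n := Nat.cast_pos.mpr hn
  · rw [le_div_iff₀ hn', mul_comm, ← logb_pow]
    exact logb_le_logb_of_le hb (pow_pos hlam n) (hlow n)
  · have hN := logb_le_logb_of_le hb ((pow_pos hlam n).trans_le (hlow n)) (hupp n)
    rw [logb_mul (by positivity) (by positivity), logb_pow, logb_pow] at hN
    rw [div_le_iff₀ hn']
    field_simp
    linarith

theorem List.injective_uncurry_cons {α : Type*} :
    Function.Injective fun p : α × List α => p.1 :: p.2 :=
  fun _ _ h => Prod.ext (List.cons.inj h).1 (List.cons.inj h).2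

def wordsOfLength (α : Type*) [Fintype α] (n : ℕ) : Finset (List α) :=
  (univ : Finset (List.Vector α n)).map ⟨List.Vector.toList, List.Vector.toList_injective⟩

@[simp]
theorem mem_wordsOfLength {α : Type*} [Fintype α] {n : ℕ} {x : List α} :
    x ∈ wordsOfLength α n ↔ x.length = n := by
  simp only [wordsOfLength, Finset.mem_map, mem_univ, true_and, Function.Embedding.coeFn_mk]
  exact ⟨fun ⟨v, hv⟩ => hv ▸ v.toList_length, fun h => ⟨⟨x, h⟩, rfl⟩⟩

section ChannelOutput

variable {q : ℕ} {J : Finset (Fin q)} {a : Fin q} {x : List (Fin q)}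

@[simp]
theorem channelOutput_cons_of_mem (ha : a ∈ J) :
    channelOutput J (a :: x) = a :: channelOutput J x := by
  simp [channelOutput, ha]

@[simp]
theorem channelOutput_cons_of_notMem (ha : a ∉ J) :
    channelOutput J (a :: x) = channelOutput J x := by
  simp [channelOutput, ha]

theorem channelOutput_eq_of_cons_eq {y : List (Fin q)}
    (h : channelOutput J (a :: x) = channelOutput J (a :: y)) :
    channelOutput J x = channelOutput J y := by
  by_cases ha : a ∈ J
  · simpa [ha] using h
  · simpa [ha] using h

theorem channelOutputs_eq_coe_image {ι : Type} [DecidableEq (ι → List (Fin q))]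
    (𝓘 : ι → Finset (Fin q)) (n : ℕ) :
    channelOutputs 𝓘 n =
      ↑((wordsOfLength (Fin q) n).image fun x i => channelOutput (𝓘 i) x) := by
  ext y
  simp [channelOutputs, eq_comm]

end ChannelOutput

namespace TwoChannels

variable {q : ℕ} (I1 I2 : Finset (Fin q))

def Admissible (a b : Fin q) : Prop := ¬(a ∈ I2 \ I1 ∧ b ∈ I1 \ I2)

def IsReduced (x : List (Fin q)) : Prop :=
  (∀ a ∈ x, a ∈ I1 ∪ I2) ∧ x.IsChain (Admissible I1 I2)

instance : DecidableRel (Admissible I1 I2) := fun _ _ => inferInstanceAs (Decidable (¬_))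

instance : DecidablePred (IsReduced I1 I2) := fun _ => inferInstanceAs (Decidable (_ ∧ _))

variable {I1 I2}

theorem isReduced_nil : IsReduced I1 I2 [] := by simp [IsReduced]

theorem isReduced_cons {a : Fin q} {w : List (Fin q)} :
    IsReduced I1 I2 (a :: w) ↔
      a ∈ I1 ∪ I2 ∧ (∀ b ∈ w.head?, Admissible I1 I2 a b) ∧ IsReduced I1 I2 w := by
  simp only [IsReduced, List.mem_cons, forall_eq_or_imp, List.isChain_cons]
  tauto

theorem mem_inter_of_channelOutput_eq_cons {e c : Fin q} {v t : List (Fin q)}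
    (hv : IsReduced I1 I2 (e :: v)) (he : e ∉ I1) (h : channelOutput I1 (e :: v) = c :: t) :
    c ∈ I2 := by
  induction v generalizing e with
  | nil => simp [channelOutput, he] at h
  | cons f v ih =>
    obtain ⟨heU, hef, hv'⟩ := isReduced_cons.mp hv
    rw [channelOutput_cons_of_notMem he] at h
    by_cases hf : f ∈ I1
    · rw [channelOutput_cons_of_mem hf, List.cons.injEq] at h
      have he2 : e ∈ I2 \ I1 := mem_sdiff.mpr ⟨(mem_union.mp heU).resolve_left he, he⟩
      rw [← h.1]
      by_contra hf2
      exact hef f rfl ⟨he2, mem_sdiff.mpr ⟨hf, hf2⟩⟩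
    · exact ih hv' hf h

theorem eq_nil_of_channelOutput_eq_nil {x : List (Fin q)} (hx : IsReduced I1 I2 x)
    (h1 : channelOutput I1 x = []) (h2 : channelOutput I2 x = []) : x = [] := by
  simp only [channelOutput, List.filter_eq_nil_iff, decide_eq_true_eq] at h1 h2
  exact List.eq_nil_iff_forall_not_mem.mpr fun a ha =>
    (mem_union.mp (hx.1 a ha)).elim (h1 a ha) (h2 a ha)

theorem mem_of_mem_of_channelOutput_eq {a b : Fin q} {u v : List (Fin q)}
    (hy : IsReduced I1 I2 (b :: v))
    (h1 : channelOutput I1 (a :: u) = channelOutput I1 (b :: v))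
    (h2 : channelOutput I2 (a :: u) = channelOutput I2 (b :: v)) (ha : a ∈ I1) : b ∈ I1 := by
  by_contra hb
  have hb2 : b ∈ I2 := (mem_union.mp (isReduced_cons.mp hy).1).resolve_left hb
  by_cases ha2 : a ∈ I2
  · rw [channelOutput_cons_of_mem ha2, channelOutput_cons_of_mem hb2, List.cons.injEq] at h2
    exact hb (h2.1 ▸ ha)
  · rw [channelOutput_cons_of_mem ha] at h1
    exact ha2 (mem_inter_of_channelOutput_eq_cons hy hb h1.symm)

theorem head_eq_of_channelOutput_eq {a b : Fin q} {u v : List (Fin q)}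
    (hx : IsReduced I1 I2 (a :: u)) (hy : IsReduced I1 I2 (b :: v))
    (h1 : channelOutput I1 (a :: u) = channelOutput I1 (b :: v))
    (h2 : channelOutput I2 (a :: u) = channelOutput I2 (b :: v)) : a = b := by
  by_cases ha : a ∈ I1
  · have hb := mem_of_mem_of_channelOutput_eq hy h1 h2 ha
    rw [channelOutput_cons_of_mem ha, channelOutput_cons_of_mem hb, List.cons.injEq] at h1
    exact h1.1
  · have hb : b ∉ I1 := fun hb => ha (mem_of_mem_of_channelOutput_eq hx h1.symm h2.symm hb)
    have ha2 := (mem_union.mp (isReduced_cons.mp hx).1).resolve_left ha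
    have hb2 := (mem_union.mp (isReduced_cons.mp hy).1).resolve_left hb
    rw [channelOutput_cons_of_mem ha2, channelOutput_cons_of_mem hb2, List.cons.injEq] at h2
    exact h2.1

theorem eq_of_channelOutput_eq {x y : List (Fin q)} (hx : IsReduced I1 I2 x)
    (hy : IsReduced I1 I2 y) (h1 : channelOutput I1 x = channelOutput I1 y)
    (h2 : channelOutput I2 x = channelOutput I2 y) : x = y := by
  induction x generalizing y with
  | nil => exact (eq_nil_of_channelOutput_eq_nil hy h1.symm h2.symm).symm
  | cons a u ih =>
    cases y with
    | nil => exact eq_nil_of_channelOutput_eq_nil hx h1 h2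
    | cons b v =>
      obtain rfl := head_eq_of_channelOutput_eq hx hy h1 h2
      rw [ih (isReduced_cons.mp hx).2.2 (isReduced_cons.mp hy).2.2
        (channelOutput_eq_of_cons_eq h1) (channelOutput_eq_of_cons_eq h2)]

variable (I1 I2) in
def insertLetter (a : Fin q) : List (Fin q) → List (Fin q)
  | [] => [a]
  | b :: w =>
    if a ∈ I2 \ I1 ∧ b ∈ I1 \ I2 then b :: insertLetter a w else a :: b :: w

variable (I1 I2) in
def reduce : List (Fin q) → List (Fin q)
  | [] => []
  | a :: x => if a ∈ I1 ∪ I2 then insertLetter I1 I2 a (reduce x) else reduce x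

theorem length_insertLetter (a : Fin q) (w : List (Fin q)) :
    (insertLetter I1 I2 a w).length = w.length + 1 := by
  induction w with
  | nil => rfl
  | cons b w ih => unfold insertLetter; split_ifs <;> simp [ih]

theorem length_reduce_le (x : List (Fin q)) : (reduce I1 I2 x).length ≤ x.length := by
  induction x with
  | nil => rfl
  | cons a x ih => unfold reduce; split_ifs <;> simp [length_insertLetter] <;> omega

theorem isReduced_insertLetter {a : Fin q} {w : List (Fin q)} (ha : a ∈ I1 ∪ I2)
    (hw : IsReduced I1 I2 w) : IsReduced I1 I2 (insertLetter I1 I2 a w) := by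
  induction w with
  | nil => exact isReduced_cons.mpr ⟨ha, by simp, isReduced_nil⟩
  | cons b w ih =>
    obtain ⟨hb, hbw, hw⟩ := isReduced_cons.mp hw
    unfold insertLetter
    split_ifs with hab
    · exact isReduced_cons.mpr ⟨hb, fun c _ h => (mem_sdiff.mp h.1).2 (mem_sdiff.mp hab.2).1,
        ih hw⟩
    · exact isReduced_cons.mpr ⟨ha, by simpa [Admissible] using hab,
        isReduced_cons.mpr ⟨hb, hbw, hw⟩⟩

theorem isReduced_reduce (x : List (Fin q)) : IsReduced I1 I2 (reduce I1 I2 x) := by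
  induction x with
  | nil => exact isReduced_nil
  | cons a x ih =>
    unfold reduce
    split_ifs with ha
    · exact isReduced_insertLetter ha ih
    · exact ih

theorem channelOutput_insertLetter {J : Finset (Fin q)} (hJ : J = I1 ∨ J = I2) (a : Fin q)
    (w : List (Fin q)) : channelOutput J (insertLetter I1 I2 a w) = channelOutput J (a :: w) := by
  induction w with
  | nil => rfl
  | cons b w ih =>
    unfold insertLetter
    split_ifs with hab
    · simp only [Finset.mem_sdiff] at hab
      rcases hJ with rfl | rfl <;> simp_all
    · rfl

theorem channelOutput_reduce {J : Finset (Fin q)} (hJ : J = I1 ∨ J = I2) (x : List (Fin q)) :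
    channelOutput J (reduce I1 I2 x) = channelOutput J x := by
  induction x with
  | nil => rfl
  | cons a x ih =>
    unfold reduce
    split_ifs with ha
    · rw [channelOutput_insertLetter hJ]
      by_cases haJ : a ∈ J <;> simp [haJ, ih]
    · have haJ : a ∉ J := by rcases hJ with rfl | rfl <;> simp_all
      simp [haJ, ih]

variable (I1 I2) in
def reducedWords (n : ℕ) : Finset (List (Fin q)) :=
  (wordsOfLength (Fin q) n).filter (IsReduced I1 I2)

theorem mem_reducedWords {n : ℕ} {x : List (Fin q)} :
    x ∈ reducedWords I1 I2 n ↔ x.length = n ∧ IsReduced I1 I2 x := by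
  simp [reducedWords]

theorem reducedWords_zero : reducedWords I1 I2 0 = {[]} := by
  ext x
  simp only [mem_reducedWords, List.length_eq_zero_iff, mem_singleton, and_iff_left_iff_imp]
  rintro rfl
  exact isReduced_nil

theorem reducedWords_succ (n : ℕ) :
    reducedWords I1 I2 (n + 1) =
      (((I1 ∪ I2) ×ˢ reducedWords I1 I2 n).filter
        fun p => ∀ b ∈ p.2.head?, Admissible I1 I2 p.1 b).image fun p => p.1 :: p.2 := by
  ext (_ | ⟨a, w⟩)
  · simp [mem_reducedWords]
  · simp only [mem_reducedWords, isReduced_cons, mem_image, mem_filter, mem_product,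
      List.length_cons, Nat.add_right_cancel_iff, Prod.exists, List.cons.injEq]
    constructor
    · rintro ⟨hn, ha, haw, hw⟩
      exact ⟨a, w, ⟨⟨ha, hn, hw⟩, haw⟩, rfl, rfl⟩
    · rintro ⟨a, w, ⟨⟨ha, hn, hw⟩, haw⟩, rfl, rfl⟩
      exact ⟨hn, ha, haw, hw⟩

theorem card_reducedWords_succ_add (n : ℕ) :
    #(reducedWords I1 I2 (n + 1)) +
        #(I2 \ I1) * #((reducedWords I1 I2 n).filter fun w => ∃ b ∈ w.head?, b ∈ I1 \ I2) =
      #(I1 ∪ I2) * #(reducedWords I1 I2 n) := by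
  have hbad : (((I1 ∪ I2) ×ˢ reducedWords I1 I2 n).filter
        fun p => ¬∀ b ∈ p.2.head?, Admissible I1 I2 p.1 b) =
      (I2 \ I1) ×ˢ (reducedWords I1 I2 n).filter fun w => ∃ b ∈ w.head?, b ∈ I1 \ I2 := by
    ext ⟨a, w⟩
    simp only [Admissible, mem_filter, mem_product, not_forall, not_not, exists_prop]
    constructor
    · rintro ⟨⟨-, hw⟩, b, hb, ha, hb'⟩
      exact ⟨ha, hw, b, hb, hb'⟩
    · rintro ⟨ha, hw, b, hb, hb'⟩
      exact ⟨⟨mem_union_right _ (mem_sdiff.mp ha).1, hw⟩, b, hb, ha, hb'⟩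
  rw [reducedWords_succ, card_image_of_injective _ List.injective_uncurry_cons, ← card_product,
    ← hbad, card_filter_add_card_filter_not, card_product]

theorem card_filter_reducedWords_succ (n : ℕ) :
    #((reducedWords I1 I2 (n + 1)).filter fun w => ∃ b ∈ w.head?, b ∈ I1 \ I2) =
      #(I1 \ I2) * #(reducedWords I1 I2 n) := by
  have h : ((reducedWords I1 I2 (n + 1)).filter fun w => ∃ b ∈ w.head?, b ∈ I1 \ I2) =
      ((I1 \ I2) ×ˢ reducedWords I1 I2 n).image fun p => p.1 :: p.2 := by
    ext (_ | ⟨a, w⟩)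
    · simp
    · simp only [mem_filter, mem_reducedWords, isReduced_cons, List.length_cons,
        Nat.add_right_cancel_iff, List.head?_cons, Option.mem_def, Option.some.injEq,
        exists_eq_left', mem_image, mem_product, Prod.exists, List.cons.injEq]
      constructor
      · rintro ⟨⟨hn, -, -, hw⟩, ha⟩
        exact ⟨a, w, ⟨ha, hn, hw⟩, rfl, rfl⟩
      · rintro ⟨a, w, ⟨ha, hn, hw⟩, rfl, rfl⟩
        refine ⟨⟨hn, mem_union_left _ (mem_sdiff.mp ha).1, fun b _ h => ?_, hw⟩, ha⟩
        exact (mem_sdiff.mp h.1).2 (mem_sdiff.mp ha).1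
  rw [h, card_image_of_injective _ List.injective_uncurry_cons, card_product]

theorem card_reducedWords_zero : #(reducedWords I1 I2 0) = 1 := by
  simp [reducedWords_zero]

theorem card_reducedWords_one : #(reducedWords I1 I2 1) = #(I1 ∪ I2) := by
  have h := card_reducedWords_succ_add (I1 := I1) (I2 := I2) 0
  rwa [reducedWords_zero, filter_singleton, if_neg (by simp), card_empty, mul_zero, add_zero,
    card_singleton, mul_one] at h

theorem card_reducedWords_add_two (n : ℕ) :
    #(reducedWords I1 I2 (n + 2)) + #(I1 \ I2) * #(I2 \ I1) * #(reducedWords I1 I2 n) =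
      #(I1 ∪ I2) * #(reducedWords I1 I2 (n + 1)) := by
  rw [← card_reducedWords_succ_add (n + 1), card_filter_reducedWords_succ]
  ring

theorem card_reducedWords_le_ncard (n : ℕ) :
    #(reducedWords I1 I2 n) ≤ (channelOutputs ![I1, I2] n).ncard := by
  classical
  rw [channelOutputs_eq_coe_image, Set.ncard_coe_finset]
  refine card_le_card_of_injOn _ (fun x hx => mem_image_of_mem _ (mem_filter.mp hx).1) ?_
  intro x hx y hy h
  exact eq_of_channelOutput_eq (mem_reducedWords.mp hx).2 (mem_reducedWords.mp hy).2
    (congrFun h 0) (congrFun h 1)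

theorem ncard_channelOutputs_le_sum (n : ℕ) :
    (channelOutputs ![I1, I2] n).ncard ≤ ∑ m ∈ range (n + 1), #(reducedWords I1 I2 m) := by
  classical
  set out := fun (x : List (Fin q)) i => channelOutput (![I1, I2] i) x
  have hsub : (wordsOfLength (Fin q) n).image out ⊆
      (range (n + 1)).biUnion fun m => (reducedWords I1 I2 m).image out := by
    simp only [subset_iff, mem_image, mem_wordsOfLength, mem_biUnion, mem_range]
    rintro _ ⟨x, rfl, rfl⟩
    refine ⟨_, Nat.lt_succ_of_le (length_reduce_le x), reduce I1 I2 x,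
      mem_reducedWords.mpr ⟨rfl, isReduced_reduce x⟩, funext fun i => ?_⟩
    fin_cases i
    exacts [channelOutput_reduce (Or.inl rfl) x, channelOutput_reduce (Or.inr rfl) x]
  rw [channelOutputs_eq_coe_image, Set.ncard_coe_finset]
  calc _ ≤ _ := card_le_card hsub
    _ ≤ _ := card_biUnion_le
    _ ≤ _ := sum_le_sum fun m _ => card_image_le

theorem capacity_eq_logb (hq : 1 < q) {lam mu : ℝ} (hlam : 1 ≤ lam) (hmu : 0 ≤ mu)
    (hmulam : mu ≤ lam) (hsum : lam + mu = #(I1 ∪ I2))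
    (hprod : lam * mu = #(I1 \ I2) * #(I2 \ I1)) :
    capacity ![I1, I2] = logb q lam := by
  set c : ℕ → ℝ := fun n => #(reducedWords I1 I2 n)
  have h0 : c 0 = 1 := by simp [c, card_reducedWords_zero]
  have h1 : c 1 = lam + mu := by simp [c, card_reducedWords_one, hsum]
  have hrec (n : ℕ) : c (n + 2) = (lam + mu) * c (n + 1) - lam * mu * c n := by
    have h := congrArg (Nat.cast : ℕ → ℝ) (card_reducedWords_add_two (I1 := I1) (I2 := I2) n)
    push_cast at h
    rw [hsum, hprod]
    linarith
  have hlow (n : ℕ) : lam ^ n ≤ (channelOutputs ![I1, I2] n).ncard :=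
    (pow_le_of_recurrence h0 h1 hrec (by linarith) hmu n).trans
      (by simp only [c]; exact_mod_cast card_reducedWords_le_ncard n)
  have hupp (n : ℕ) : ((channelOutputs ![I1, I2] n).ncard : ℝ) ≤ (n + 1) ^ 2 * lam ^ n :=
    calc _ ≤ ∑ m ∈ range (n + 1), c m := by
          simp only [c]; exact_mod_cast ncard_channelOutputs_le_sum n
      _ ≤ ∑ m ∈ range (n + 1), (n + 1) * lam ^ n := by
        refine sum_le_sum fun m hm => ?_
        have hmn : m ≤ n := Nat.lt_succ_iff.mp (mem_range.mp hm)
        calc c m ≤ (m + 1) * lam ^ m := le_succ_mul_pow_of_recurrence h0 h1 hrec hmu hmulam m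
          _ ≤ (n + 1) * lam ^ n := by gcongr
      _ = (n + 1) ^ 2 * lam ^ n := by rw [sum_const, card_range, nsmul_eq_mul]; push_cast; ring
  have hq' : (1 : ℝ) < q := by exact_mod_cast hq
  exact (tendsto_logb_div_of_pow_le hq' (by linarith) 2 hlow hupp).limsup_eq

end TwoChannels

/-- the capacity of two intersecting coloring channels. -/
theorem capacity_of_two_sets (q k p1 p2 : ℕ) (hq : 2 ≤ q)
    (hk : 1 ≤ k) (hp1 : 1 ≤ p1) (hp2 : 1 ≤ p2)
    (I1 I2 : Finset (Fin q))
    (hK : (I1 ∩ I2).card = k) (hP1 : (I1 \ I2).card = p1) (hP2 : (I2 \ I1).card = p2)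
    (M : ℝ → ℝ → ℝ)
    (hM : ∀ x1 x2 : ℝ, M x1 x2 =
      (1 - x1 - x2) * Real.logb q k + x1 * Real.logb q p1 + x2 * Real.logb q p2 +
      (1 - x2) * binH (x1 / (1 - x2)) * Real.logb q 2 +
      (1 - x1) * binH (x2 / (1 - x1)) * Real.logb q 2)
    (x1s x2s : ℝ)
    (hx1 : x1s = 1 / 2 - ((k : ℝ) + p2 - p1) /
      (2 * Real.sqrt (((k : ℝ) + p1 + p2) ^ 2 - 4 * p1 * p2)))
    (hx2 : x2s = 1 / 2 - ((k : ℝ) + p1 - p2) /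
      (2 * Real.sqrt (((k : ℝ) + p1 + p2) ^ 2 - 4 * p1 * p2))) :
    capacity ![I1, I2] = M x1s x2s := by
  have hkR : (1 : ℝ) ≤ k := by exact_mod_cast hk
  have hp1R : (1 : ℝ) ≤ p1 := by exact_mod_cast hp1
  have hp2R : (1 : ℝ) ≤ p2 := by exact_mod_cast hp2
  have hdisc : 0 < ((k : ℝ) + p1 + p2) ^ 2 - 4 * p1 * p2 := by
    nlinarith [sq_nonneg ((p1 : ℝ) - p2)]
  obtain ⟨lam, mu, hsum, hprod, hdiff⟩ := exists_add_eq_mul_eq_sub_eq_sqrt hdisc.le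
  have hD : lam - mu ≠ 0 := hdiff ▸ (sqrt_pos.mpr hdisc).ne'
  have hlam : 1 ≤ lam := by linarith [sqrt_pos.mpr hdisc]
  have hmu : 0 ≤ mu := by nlinarith
  rw [TwoChannels.capacity_eq_logb hq hlam hmu (sub_nonneg.mp (hdiff ▸ sqrt_nonneg _))
      (by rw [card_union_eq_card_inter_add_card_sdiff_add_card_sdiff, hK, hP1, hP2, hsum]
          push_cast; ring)
      (by rw [hP1, hP2, hprod]),
    hM, entropy_expression_eq_logb _ (Nat.cast_ne_zero.mpr (by omega))
      (Nat.cast_ne_zero.mpr (by omega)) (Nat.cast_ne_zero.mpr (by omega)) (by linarith) hD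
      hsum hprod (by rw [hx1, ← hdiff]; field_simp; linear_combination hsum)
      (by rw [hx2, ← hdiff]; field_simp; linear_combination hsum)]
end

section
/- Fix integers k, p_1, p_2 ≥ 1 and q ≥ 2, and define M(x_1,x_2) = (1−x_1−x_2) log_q k + x_1 log_q p_1 + x_2 log_q p_2 + (1−x_2) H( x_1/(1−x_2) ) log_q 2 + (1−x_1) H( x_2/(1−x_1) ) log_q 2. Then M is strictly concave on the open region { (x_1,x_2) : x_1 > 0, x_2 > 0, x_1 + x_2 < 1 }; equivalently, its Hessian matrix is negative definite at every point of this region. -/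
/-!
With `η = negMulLog`, the identity `p · H(u / p) · log 2 = η u + η (p - u) - η p` turns `M` into an
affine function plus `(log q)⁻¹` times
`E(x) = η x₁ + η x₂ + 2 η (1 - x₁ - x₂) - η (1 - x₁) - η (1 - x₂)`,
a signed sum of `η` composed with affine maps `ℓᵢ`. The Hessian of such a sum `∑ wᵢ η ∘ ℓᵢ` in
direction `d` is `-∑ wᵢ (ℓᵢ' d)² / ℓᵢ`; for `E` this is minus a sum of squares of two linear forms
in `d` over positive denominators, and the two forms vanish together only at `d = 0` because their
determinant is `1 - x₁ - x₂ > 0`. Strict concavity then follows from the one-variable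
second-derivative test along every segment of the triangle.
-/

open Real Set

theorem binH_mul_log_two (x : ℝ) : binH x * log 2 = negMulLog x + negMulLog (1 - x) := by
  have : log 2 ≠ 0 := (log_pos one_lt_two).ne'
  simp only [binH, logb, negMulLog]
  field_simp
  ring

theorem mul_binH_div_mul_log_two (u p : ℝ) :
    p * binH (u / p) * log 2 = negMulLog u + negMulLog (p - u) - negMulLog p := by
  rcases eq_or_ne p 0 with rfl | hp
  · simp [negMulLog, log_neg_eq_log]
  · have hu := negMulLog_mul p (u / p)
    have hpu := negMulLog_mul p ((p - u) / p)
    rw [mul_div_cancel₀ _ hp] at hu hpu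
    rw [mul_assoc, binH_mul_log_two, one_sub_div hp, hu, hpu]
    field_simp
    ring

theorem AffineMap.concaveOn {𝕜 E F : Type*} [Ring 𝕜] [PartialOrder 𝕜] [AddCommGroup E]
    [Module 𝕜 E] [AddCommGroup F] [PartialOrder F] [Module 𝕜 F] (f : E →ᵃ[𝕜] F) {s : Set E}
    (hs : Convex 𝕜 s) : ConcaveOn 𝕜 s f :=
  ⟨hs, fun _ _ _ _ _ _ _ _ hab => (Convex.combo_affine_apply hab).ge⟩

section Concavity

variable {𝕜 E : Type*} [Field 𝕜] [LinearOrder 𝕜] [IsStrictOrderedRing 𝕜]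

theorem StrictConcaveOn.const_mul [AddCommMonoid E] [SMul 𝕜 E] {s : Set E} {f : E → 𝕜}
    {c : 𝕜} (hf : StrictConcaveOn 𝕜 s f) (hc : 0 < c) :
    StrictConcaveOn 𝕜 s fun x => c * f x := by
  refine ⟨hf.1, fun x hx y hy hxy a b ha hb hab => ?_⟩
  have := mul_lt_mul_of_pos_left (hf.2 hx hy hxy ha hb hab) hc
  simp only [smul_eq_mul] at this ⊢
  linarith

theorem strictConcaveOn_of_lineMap {β : Type*} [AddCommGroup E] [Module 𝕜 E]
    [AddCommMonoid β] [PartialOrder β] [SMul 𝕜 β] {s : Set E} {f : E → β} (hs : Convex 𝕜 s)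
    (h : ∀ x ∈ s, ∀ y ∈ s, x ≠ y → StrictConcaveOn 𝕜 (Icc (0 : 𝕜) 1) (f ∘ AffineMap.lineMap x y)) :
    StrictConcaveOn 𝕜 s f := by
  refine ⟨hs, fun x hx y hy hxy a b ha hb hab => ?_⟩
  have := (h x hx y hy hxy).2 (left_mem_Icc.2 zero_le_one) (right_mem_Icc.2 zero_le_one)
    zero_ne_one ha hb hab
  obtain rfl : a = 1 - b := eq_sub_of_add_eq hab
  simpa [AffineMap.lineMap_apply_module] using this

end Concavity

theorem AffineMap.apply_lineMap_eq_add_mul {E : Type*} [AddCommGroup E] [Module ℝ E]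
    (ℓ : E →ᵃ[ℝ] ℝ) (x y : E) (t : ℝ) :
    ℓ (AffineMap.lineMap x y t) = ℓ x + t * ℓ.linear (y - x) := by
  rw [AffineMap.apply_lineMap, AffineMap.lineMap_apply_ring', ← vsub_eq_sub y x,
    AffineMap.linearMap_vsub, vsub_eq_sub]
  ring

theorem strictConcaveOn_sum_mul_negMulLog_affine {ι : Type*} (s : Finset ι) (w a b : ι → ℝ)
    {D : Set ℝ} (hD : Convex ℝ D) (hne : ∀ t ∈ interior D, ∀ i ∈ s, a i + t * b i ≠ 0)
    (hcurv : ∀ t ∈ interior D, 0 < ∑ i ∈ s, w i * (b i ^ 2 / (a i + t * b i))) :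
    StrictConcaveOn ℝ D fun t => ∑ i ∈ s, w i * negMulLog (a i + t * b i) := by
  have hline (i : ι) (t : ℝ) : HasDerivAt (fun u => a i + u * b i) (b i) t :=
    (hasDerivAt_mul_const (b i)).const_add (a i)
  have hderiv : ∀ t ∈ interior D, HasDerivAt (fun t => ∑ i ∈ s, w i * negMulLog (a i + t * b i))
      (∑ i ∈ s, w i * ((-log (a i + t * b i) - 1) * b i)) t := fun t ht =>
    HasDerivAt.fun_sum fun i hi =>
      .const_mul (w i) (((hasDerivAt_negMulLog (hne t ht i hi)).comp t (hline i t) :))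
  have hderiv2 : ∀ t ∈ interior D,
      HasDerivAt (fun t => ∑ i ∈ s, w i * ((-log (a i + t * b i) - 1) * b i))
        (-∑ i ∈ s, w i * (b i ^ 2 / (a i + t * b i))) t := by
    intro t ht
    rw [← Finset.sum_neg_distrib]
    refine HasDerivAt.fun_sum fun i hi => ?_
    exact (HasDerivAt.const_mul (w i) ((((hasDerivAt_log (hne t ht i hi)).comp t
      (hline i t)).neg.sub_const 1).mul_const (b i) :)).congr_deriv (by ring)
  refine strictConcaveOn_of_deriv2_neg hD (by fun_prop) fun t ht => ?_
  have hdf : deriv (fun t => ∑ i ∈ s, w i * negMulLog (a i + t * b i)) =ᶠ[nhds t]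
      fun t => ∑ i ∈ s, w i * ((-log (a i + t * b i) - 1) * b i) := by
    filter_upwards [isOpen_interior.mem_nhds ht] with u hu using (hderiv u hu).deriv
  rw [Function.iterate_succ_apply, Function.iterate_one, hdf.deriv_eq, (hderiv2 t ht).deriv]
  exact neg_neg_of_pos (hcurv t ht)

theorem strictConcaveOn_sum_mul_negMulLog_affineMap {ι E : Type*} [AddCommGroup E]
    [Module ℝ E] (s : Finset ι) (w : ι → ℝ) (ℓ : ι → E →ᵃ[ℝ] ℝ) {S : Set E}
    (hS : Convex ℝ S) (hne : ∀ z ∈ S, ∀ i ∈ s, ℓ i z ≠ 0)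
    (hcurv : ∀ z ∈ S, ∀ d ≠ 0, 0 < ∑ i ∈ s, w i * ((ℓ i).linear d ^ 2 / ℓ i z)) :
    StrictConcaveOn ℝ S fun z => ∑ i ∈ s, w i * negMulLog (ℓ i z) := by
  refine strictConcaveOn_of_lineMap hS fun x hx y hy hxy => ?_
  have hmem : ∀ t ∈ interior (Icc (0 : ℝ) 1), AffineMap.lineMap x y t ∈ S :=
    fun t ht => hS.lineMap_mem hx hy (interior_subset ht)
  have := strictConcaveOn_sum_mul_negMulLog_affine s w (fun i => ℓ i x)
    (fun i => (ℓ i).linear (y - x)) (convex_Icc 0 1)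
    (fun t ht i hi => by
      simpa only [AffineMap.apply_lineMap_eq_add_mul] using hne _ (hmem t ht) i hi)
    (fun t ht => by
      simpa only [AffineMap.apply_lineMap_eq_add_mul] using
        hcurv _ (hmem t ht) _ (sub_ne_zero.2 hxy.symm))
  simpa only [Function.comp_def, AffineMap.apply_lineMap_eq_add_mul] using this

noncomputable def twoChannelEntropy (z : ℝ × ℝ) : ℝ :=
  negMulLog z.1 + negMulLog z.2 + 2 * negMulLog (1 - z.1 - z.2)
    - negMulLog (1 - z.1) - negMulLog (1 - z.2)

theorem convex_openSimplex :
    Convex ℝ {z : ℝ × ℝ | 0 < z.1 ∧ 0 < z.2 ∧ z.1 + z.2 < 1} :=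
  (convex_halfSpace_gt (LinearMap.fst ℝ ℝ ℝ).isLinear 0).inter
    ((convex_halfSpace_gt (LinearMap.snd ℝ ℝ ℝ).isLinear 0).inter
      (convex_halfSpace_lt (LinearMap.fst ℝ ℝ ℝ + LinearMap.snd ℝ ℝ ℝ).isLinear 1))

/-- The difference of the two sides is minus the Hessian quadratic form of `twoChannelEntropy`
at `z` in direction `d`. -/
theorem twoChannelEntropy_hessian_pos {z₁ z₂ d₁ d₂ : ℝ} (h₁ : 0 < z₁) (h₂ : 0 < z₂)
    (h : z₁ + z₂ < 1) (hd : d₁ ≠ 0 ∨ d₂ ≠ 0) :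
    d₁ ^ 2 / (1 - z₁) + d₂ ^ 2 / (1 - z₂)
      < d₁ ^ 2 / z₁ + d₂ ^ 2 / z₂ + 2 * (d₁ + d₂) ^ 2 / (1 - z₁ - z₂) := by
  have hs : 0 < 1 - z₁ - z₂ := by linarith
  have h₁' : 0 < 1 - z₁ := by linarith
  have h₂' : 0 < 1 - z₂ := by linarith
  set A := d₁ * (1 - z₂) + z₁ * d₂
  set B := d₂ * (1 - z₁) + z₂ * d₁
  have hsos : d₁ ^ 2 / z₁ + d₂ ^ 2 / z₂ + 2 * (d₁ + d₂) ^ 2 / (1 - z₁ - z₂)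
      - (d₁ ^ 2 / (1 - z₁) + d₂ ^ 2 / (1 - z₂))
      = A ^ 2 / (z₁ * (1 - z₁ - z₂) * (1 - z₂)) + B ^ 2 / (z₂ * (1 - z₁ - z₂) * (1 - z₁)) := by
    field_simp
    ring
  have hAB : A ≠ 0 ∨ B ≠ 0 := by
    by_contra! hAB
    have e₁ : (1 - z₁ - z₂) * d₁ = 0 := by linear_combination (1 - z₁) * hAB.1 - z₁ * hAB.2
    have e₂ : (1 - z₁ - z₂) * d₂ = 0 := by linear_combination (1 - z₂) * hAB.2 - z₂ * hAB.1
    rcases hd with hd | hd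
    · exact hd ((mul_eq_zero.1 e₁).resolve_left hs.ne')
    · exact hd ((mul_eq_zero.1 e₂).resolve_left hs.ne')
  rw [← sub_pos, hsos]
  rcases hAB with hA | hB
  · exact add_pos_of_pos_of_nonneg (by positivity) (by positivity)
  · exact add_pos_of_nonneg_of_pos (by positivity) (by positivity)

theorem strictConcaveOn_twoChannelEntropy :
    StrictConcaveOn ℝ {z : ℝ × ℝ | 0 < z.1 ∧ 0 < z.2 ∧ z.1 + z.2 < 1} twoChannelEntropy := by
  let fst := (LinearMap.fst ℝ ℝ ℝ).toAffineMap
  let snd := (LinearMap.snd ℝ ℝ ℝ).toAffineMap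
  let one := AffineMap.const ℝ (ℝ × ℝ) (1 : ℝ)
  have key := strictConcaveOn_sum_mul_negMulLog_affineMap Finset.univ ![1, 1, 2, -1, -1]
    ![fst, snd, one - fst - snd, one - fst, one - snd] convex_openSimplex ?_ ?_
  · refine key.congr fun z _ => ?_
    simp only [twoChannelEntropy, Fin.sum_univ_five, Fin.isValue, Matrix.cons_val,
      Matrix.cons_val_zero, Matrix.cons_val_one, AffineMap.coe_sub, AffineMap.coe_const,
      Function.const_one, LinearMap.coe_toAffineMap, LinearMap.coe_fst, LinearMap.coe_snd,
      Pi.sub_apply, Pi.one_apply, fst, snd, one]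
    ring
  · rintro z ⟨h₁, h₂, h₃⟩ i -
    fin_cases i <;>
      simp only [Fin.reduceFinMk, Fin.zero_eta, Fin.mk_one, Fin.isValue, Matrix.cons_val,
        Matrix.cons_val_zero, Matrix.cons_val_one, AffineMap.coe_sub, AffineMap.coe_const,
        Function.const_one, LinearMap.coe_toAffineMap, LinearMap.coe_fst, LinearMap.coe_snd,
        Pi.sub_apply, Pi.one_apply, fst, snd, one] <;>
      linarith
  · rintro z ⟨h₁, h₂, h₃⟩ d hd
    have := twoChannelEntropy_hessian_pos h₁ h₂ h₃ (d₁ := d.1) (d₂ := d.2) (by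
      contrapose! hd; exact Prod.ext hd.1 hd.2)
    simp only [Fin.sum_univ_five, Fin.isValue, Matrix.cons_val, Matrix.cons_val_zero,
      Matrix.cons_val_one, AffineMap.sub_linear, AffineMap.const_linear,
      LinearMap.toAffineMap_linear, LinearMap.sub_apply, LinearMap.zero_apply, LinearMap.coe_fst,
      LinearMap.coe_snd, AffineMap.coe_sub, AffineMap.coe_const, Function.const_one,
      LinearMap.coe_toAffineMap, Pi.sub_apply, Pi.one_apply, fst, snd, one]
    convert sub_pos.2 this using 1
    ring

theorem two_sets_M_strictConcave_general (q k p1 p2 : ℕ) (hq : 2 ≤ q)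
    (M : ℝ × ℝ → ℝ)
    (hM : ∀ z : ℝ × ℝ, M z =
      (1 - z.1 - z.2) * Real.logb q k + z.1 * Real.logb q p1 + z.2 * Real.logb q p2 +
      (1 - z.2) * binH (z.1 / (1 - z.2)) * Real.logb q 2 +
      (1 - z.1) * binH (z.2 / (1 - z.1)) * Real.logb q 2) :
    StrictConcaveOn ℝ {z : ℝ × ℝ | 0 < z.1 ∧ 0 < z.2 ∧ z.1 + z.2 < 1} M := by
  have hlogq : 0 < (log q)⁻¹ := inv_pos.2 (log_pos (Nat.one_lt_cast.2 hq))
  let fst := (LinearMap.fst ℝ ℝ ℝ).toAffineMap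
  let snd := (LinearMap.snd ℝ ℝ ℝ).toAffineMap
  let affinePart : ℝ × ℝ →ᵃ[ℝ] ℝ := logb q k • (AffineMap.const ℝ (ℝ × ℝ) 1 - fst - snd)
    + logb q p1 • fst + logb q p2 • snd
  have hM' (z : ℝ × ℝ) : affinePart z + (log q)⁻¹ * twoChannelEntropy z = M z := by
    have h₁ := mul_binH_div_mul_log_two z.1 (1 - z.2)
    have h₂ := mul_binH_div_mul_log_two z.2 (1 - z.1)
    rw [sub_right_comm] at h₁
    rw [hM, show logb q 2 = log 2 / log q from rfl, ← mul_div_assoc, ← mul_div_assoc, h₁, h₂]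
    simp only [AffineMap.coe_add, AffineMap.coe_smul, AffineMap.coe_sub, AffineMap.coe_const,
      Function.const_one, LinearMap.coe_toAffineMap, LinearMap.coe_fst, LinearMap.coe_snd,
      Pi.add_apply, Pi.smul_apply, Pi.sub_apply, Pi.one_apply, smul_eq_mul, twoChannelEntropy,
      affinePart, fst, snd]
    ring
  exact ((affinePart.concaveOn convex_openSimplex).add_strictConcaveOn
    (strictConcaveOn_twoChannelEntropy.const_mul hlogq)).congr fun z _ => hM' z

/-- the two-channel objective function `M` is strictly concave on
the open region `{(x₁,x₂) : x₁ > 0, x₂ > 0, x₁ + x₂ < 1}`. -/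
theorem two_sets_M_strictConcave (q k p1 p2 : ℕ) (hq : 2 ≤ q)
    (hk : 1 ≤ k) (hp1 : 1 ≤ p1) (hp2 : 1 ≤ p2)
    (M : ℝ × ℝ → ℝ)
    (hM : ∀ z : ℝ × ℝ, M z =
      (1 - z.1 - z.2) * Real.logb q k + z.1 * Real.logb q p1 + z.2 * Real.logb q p2 +
      (1 - z.2) * binH (z.1 / (1 - z.2)) * Real.logb q 2 +
      (1 - z.1) * binH (z.2 / (1 - z.1)) * Real.logb q 2) :
    StrictConcaveOn ℝ {z : ℝ × ℝ | 0 < z.1 ∧ 0 < z.2 ∧ z.1 + z.2 < 1} M :=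
  two_sets_M_strictConcave_general q k p1 p2 hq M hM
end

section
/- Let 𝓘 = (I_1, I_2) be two coloring channels over Σ = [q] with K = I_1 ∩ I_2, I_1* = I_1 \ I_2, I_2* = I_2 \ I_1, L = Σ \ (I_1 ∪ I_2), and |K| = k, |I_1*| = p_1, |I_2*| = p_2 with k, p_1, p_2 ≥ 1. Let i_1, i_2, j_1, j_2 ≥ 0 be integers with j_1 + j_2 + i_1 + i_2 = n, and assume j_2 = 0 or L ≠ ∅. Let A^{i_1,i_2,j_1,j_2} be the set of x ∈ Σ^n containing exactly i_ℓ entries from I_ℓ* for ℓ = 1,2, exactly j_1 entries from K, and exactly j_2 entries from L, and let A_𝓘^{i_1,i_2,j_1,j_2} = { x_𝓘 : x ∈ A^{i_1,i_2,j_1,j_2} }. Then |A_𝓘^{i_1,i_2,j_1,j_2}| = k^{j_1} p_1^{i_1} p_2^{i_2} C(j_1+i_1, i_1) C(j_1+i_2, i_2). -/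
/-!
Write `K = I₁ ∩ I₂`. The outputs `u = x_{I₁}` and `v = x_{I₂}` of an input `x` share the common
part `w = u_{I₂} = v_{I₁} = x_K`, a word of length `j₁` over `K`, and `u` (resp. `v`) is an
interleaving of `w` with a word of length `i₁` over `I₁ \ I₂` (resp. `i₂` over `I₂ \ I₁`).
Conversely, every such pair `(u, v)` is an output: merge `u` and `v` along `w`, then append `j₂`
letters outside `I₁ ∪ I₂`. Two fixed words of lengths `j` and `i` over disjoint alphabets
interleave in `C(j + i, i)` ways, which gives the count.
-/

theorem Set.Finite.ncard_biUnion_eq_mul {ι α : Type*} {t : Set ι} (ht : t.Finite)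
    {s : ι → Set α} (hs : ∀ i ∈ t, (s i).Finite) (h : t.PairwiseDisjoint s) {c : ℕ}
    (hc : ∀ i ∈ t, (s i).ncard = c) : (⋃ i ∈ t, s i).ncard = t.ncard * c := by
  rw [ht.ncard_biUnion hs h, finsum_mem_congr rfl hc, ← finsum_one, finsum_mem_mul, one_mul]

namespace List

variable {α : Type*}

def words (s : Finset α) (n : ℕ) : Set (List α) := {l | l.length = n ∧ ∀ a ∈ l, a ∈ s}

theorem words_eq_image (s : Finset α) (n : ℕ) :
    words s n = map (↑) '' {l : List s | l.length = n} := by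
  ext l
  constructor
  · rintro ⟨rfl, hl⟩
    lift l to List s using hl
    exact ⟨l, by simp⟩
  · rintro ⟨l, rfl, rfl⟩
    simpa [words] using fun a ha _ => ha

theorem finite_words (s : Finset α) (n : ℕ) : (words s n).Finite := by
  rw [words_eq_image]
  exact (finite_length_eq s n).image _

theorem ncard_words (s : Finset α) (n : ℕ) : (words s n).ncard = s.card ^ n := by
  rw [words_eq_image, Set.ncard_image_of_injective _ (map_injective_iff.2 Subtype.val_injective),
    ← Nat.card_coe_set_eq]
  change Nat.card (Vector s n) = _
  simp

theorem nonempty_words {s : Finset α} {n : ℕ} (h : n = 0 ∨ s.Nonempty) :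
    (words s n).Nonempty := by
  rcases h with rfl | ⟨c, hc⟩
  · exact ⟨[], by simp [words]⟩
  · exact ⟨replicate n c, by simp [words, mem_replicate, hc]⟩

def shuffles (p : α → Bool) (w v : List α) : Set (List α) :=
  {u | u.filter p = w ∧ u.filter (fun a => !p a) = v}

variable {p : α → Bool}

theorem shuffles_subset_words [DecidableEq α] (w v : List α) :
    shuffles p w v ⊆ words (w ++ v).toFinset (w.length + v.length) := by
  rintro u ⟨rfl, rfl⟩
  refine ⟨(length_eq_length_filter_add p).symm ▸ rfl, fun a ha => ?_⟩
  cases hpa : p a <;> simp [ha, hpa]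

theorem finite_shuffles (w v : List α) : (shuffles p w v).Finite := by
  classical
  exact (finite_words _ _).subset (shuffles_subset_words w v)

theorem shuffles_nil_left {v : List α} (hv : ∀ b ∈ v, p b = false) :
    shuffles p [] v = {v} := by
  ext u
  simp only [shuffles, Set.mem_singleton_iff, filter_eq_nil_iff]
  constructor
  · rintro ⟨h, rfl⟩
    exact (filter_eq_self.2 (by simpa using h)).symm
  · rintro rfl
    exact ⟨by simpa using hv, filter_eq_self.2 (by simpa using hv)⟩

theorem shuffles_nil_right {w : List α} (hw : ∀ a ∈ w, p a) :
    shuffles p w [] = {w} := by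
  ext u
  simp only [shuffles, Set.mem_singleton_iff, filter_eq_nil_iff]
  constructor
  · rintro ⟨rfl, h⟩
    exact (filter_eq_self.2 (by simpa using h)).symm
  · rintro rfl
    exact ⟨filter_eq_self.2 hw, by simpa using hw⟩

theorem shuffles_cons_cons {a b : α} (ha : p a) (hb : p b = false) (w v : List α) :
    shuffles p (a :: w) (b :: v) =
      cons a '' shuffles p w (b :: v) ∪ cons b '' shuffles p (a :: w) v := by
  ext u
  rcases u with _ | ⟨c, u⟩
  · simp [shuffles]
  · cases hc : p c <;> simp [shuffles, hc] <;> aesop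

theorem ncard_shuffles : ∀ {w v : List α}, (∀ a ∈ w, p a) → (∀ b ∈ v, p b = false) →
    (shuffles p w v).ncard = (w.length + v.length).choose v.length
  | [], v, _, hv => by simp [shuffles_nil_left hv]
  | a :: w, [], hw, _ => by simp [shuffles_nil_right hw]
  | a :: w, b :: v, hw, hv => by
    have ha := hw a mem_cons_self
    have hb := hv b mem_cons_self
    have hw' : ∀ c ∈ w, p c := fun c hc => hw c (mem_cons_of_mem a hc)
    have hv' : ∀ c ∈ v, p c = false := fun c hc => hv c (mem_cons_of_mem b hc)
    have hdisj : _root_.Disjoint (cons a '' shuffles p w (b :: v))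
        (cons b '' shuffles p (a :: w) v) := by
      refine Set.disjoint_left.2 ?_
      rintro _ ⟨u, -, rfl⟩ ⟨u', -, h⟩
      obtain ⟨rfl, -⟩ := cons.inj h
      simp [ha] at hb
    rw [shuffles_cons_cons ha hb,
      Set.ncard_union_eq hdisj ((finite_shuffles _ _).image _) ((finite_shuffles _ _).image _),
      Set.ncard_image_of_injective _ cons_injective, Set.ncard_image_of_injective _ cons_injective,
      ncard_shuffles hw' hv, ncard_shuffles hw hv']
    simp only [length_cons]
    grind [Nat.choose_succ_succ']
termination_by w v => w.length + v.length

def insertions (p : α → Bool) (s : Finset α) (w : List α) (i : ℕ) : Set (List α) :=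
  ⋃ v ∈ words s i, shuffles p w v

theorem mem_insertions {s : Finset α} {w u : List α} {i : ℕ} :
    u ∈ insertions p s w i ↔ u.filter p = w ∧ u.filter (fun a => !p a) ∈ words s i := by
  simp [insertions, shuffles]

theorem mem_or_mem_of_mem_insertions {s : Finset α} {w u : List α} {i : ℕ}
    (hu : u ∈ insertions p s w i) {a : α} (ha : a ∈ u) : a ∈ w ∨ a ∈ s := by
  obtain ⟨hw, -, hs⟩ := mem_insertions.1 hu
  cases hpa : p a
  · exact .inr (hs a (mem_filter.2 ⟨ha, by simp [hpa]⟩))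
  · exact .inl (hw ▸ mem_filter.2 ⟨ha, hpa⟩)

theorem finite_insertions (s : Finset α) (w : List α) (i : ℕ) :
    (insertions p s w i).Finite :=
  (finite_words s i).biUnion fun _ _ => finite_shuffles _ _

theorem ncard_insertions {s : Finset α} {w : List α} (hw : ∀ a ∈ w, p a)
    (hs : ∀ b ∈ s, p b = false) (i : ℕ) :
    (insertions p s w i).ncard = s.card ^ i * (w.length + i).choose i := by
  rw [insertions, (finite_words s i).ncard_biUnion_eq_mul (fun _ _ => finite_shuffles _ _),
    ncard_words]
  · rintro v - v' - hne
    exact Set.disjoint_left.2 fun u hu hu' => hne (hu.2.symm.trans hu'.2)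
  · rintro v ⟨rfl, hv⟩
    exact ncard_shuffles hw fun b hb => hs b (hv b hb)

theorem exists_filter_eq_filter_eq {q : α → Bool} : ∀ {u v : List α}, (∀ a ∈ u, p a) →
    (∀ b ∈ v, q b) → u.filter q = v.filter p →
    ∃ x : List α, (∀ c ∈ x, p c ∨ q c) ∧ x.filter p = u ∧ x.filter q = v
  | [], v, _, hv, h => ⟨v, fun c hc => .inr (hv c hc), by simpa using h.symm, filter_eq_self.2 hv⟩
  | a :: u, [], hu, _, h =>
    ⟨a :: u, fun c hc => .inl (hu c hc), filter_eq_self.2 hu, by simpa using h⟩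
  | a :: u, b :: v, hu, hv, h => by
    have hu' : ∀ c ∈ u, p c := fun c hc => hu c (mem_cons_of_mem a hc)
    have hv' : ∀ c ∈ v, q c := fun c hc => hv c (mem_cons_of_mem b hc)
    by_cases hqa : q a
    · by_cases hpb : p b
      · simp only [filter_cons, hqa, hpb, if_true, cons.injEq] at h
        obtain ⟨rfl, h⟩ := h
        obtain ⟨x, hx, hxp, hxq⟩ := exists_filter_eq_filter_eq hu' hv' h
        exact ⟨a :: x, forall_mem_cons.2 ⟨.inl hpb, hx⟩, by simp [hxp, hpb], by simp [hxq, hqa]⟩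
      · rw [filter_cons_of_neg hpb] at h
        obtain ⟨x, hx, hxp, hxq⟩ := exists_filter_eq_filter_eq hu hv' h
        exact ⟨b :: x, forall_mem_cons.2 ⟨.inr (hv b mem_cons_self), hx⟩, by simp [hxp, hpb],
          by simp [hxq, hv b mem_cons_self]⟩
    · rw [filter_cons_of_neg hqa] at h
      obtain ⟨x, hx, hxp, hxq⟩ := exists_filter_eq_filter_eq hu' hv h
      exact ⟨a :: x, forall_mem_cons.2 ⟨.inl (hu a mem_cons_self), hx⟩,
        by simp [hxp, hu a mem_cons_self], by simp [hxq, hqa]⟩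
termination_by u v => u.length + v.length

section

variable [DecidableEq α] (s t : Finset α) (x : List α)

theorem filter_mem_mem_words : x.filter (· ∈ s) ∈ words s (x.countP (· ∈ s)) :=
  ⟨(countP_eq_length_filter ..).symm, fun a ha => by simpa using (mem_filter.1 ha).2⟩

theorem filter_filter_mem_eq_inter :
    (x.filter (· ∈ s)).filter (· ∈ t) = x.filter (· ∈ s ∩ t) := by
  rw [filter_filter]
  exact filter_congr fun a _ => by simp [Bool.and_comm]

theorem filter_filter_notMem_eq_sdiff :
    (x.filter (· ∈ s)).filter (fun a => !decide (a ∈ t)) = x.filter (· ∈ s \ t) := by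
  rw [filter_filter]
  exact filter_congr fun a _ => by simp [Bool.and_comm]

theorem length_eq_countP_venn [Fintype α] :
    x.length = x.countP (· ∈ s ∩ t) + x.countP (· ∈ s \ t) + x.countP (· ∈ t \ s) +
      x.countP (· ∈ Finset.univ \ (s ∪ t)) := by
  induction x with
  | nil => simp
  | cons a x ih =>
    simp only [length_cons, countP_cons, ih]
    by_cases hs : a ∈ s <;> by_cases ht : a ∈ t <;> simp [hs, ht] <;> omega

end

end List

open List

section TwoChannels

variable {α : Type*} [DecidableEq α] {I1 I2 : Finset α}

def twoChannelOutputs (I1 I2 : Finset α) (i1 i2 j1 : ℕ) : Set (List α × List α) :=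
  ⋃ w ∈ words (I1 ∩ I2) j1,
    insertions (· ∈ I2) (I1 \ I2) w i1 ×ˢ insertions (· ∈ I1) (I2 \ I1) w i2

theorem ncard_twoChannelOutputs (I1 I2 : Finset α) (i1 i2 j1 : ℕ) :
    (twoChannelOutputs I1 I2 i1 i2 j1).ncard =
      (I1 ∩ I2).card ^ j1 * ((I1 \ I2).card ^ i1 * (j1 + i1).choose i1) *
        ((I2 \ I1).card ^ i2 * (j1 + i2).choose i2) := by
  rw [twoChannelOutputs, (finite_words _ _).ncard_biUnion_eq_mul
    (fun _ _ => (finite_insertions _ _ _).prod (finite_insertions _ _ _)), ncard_words, mul_assoc]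
  · rintro w - w' - hne
    refine Set.disjoint_left.2 fun uv huv huv' => hne ?_
    exact (mem_insertions.1 huv.1).1.symm.trans (mem_insertions.1 huv'.1).1
  · rintro w ⟨rfl, hw⟩
    rw [Set.ncard_prod, ncard_insertions, ncard_insertions]
    all_goals intro a ha; simp_all

theorem filter_pair_mem_twoChannelOutputs_iff {i1 i2 j1 : ℕ} (x : List α) :
    (x.filter (· ∈ I1), x.filter (· ∈ I2)) ∈ twoChannelOutputs I1 I2 i1 i2 j1 ↔
      x.countP (· ∈ I1 \ I2) = i1 ∧ x.countP (· ∈ I2 \ I1) = i2 ∧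
        x.countP (· ∈ I1 ∩ I2) = j1 := by
  simp only [twoChannelOutputs, Set.mem_iUnion, Set.mem_prod, mem_insertions,
    filter_filter_mem_eq_inter, filter_filter_notMem_eq_sdiff, Finset.inter_comm I2 I1]
  constructor
  · rintro ⟨w, ⟨hw, -⟩, ⟨rfl, h1, -⟩, -, h2, -⟩
    simp only [countP_eq_length_filter]
    exact ⟨h1, h2, hw⟩
  · rintro ⟨rfl, rfl, rfl⟩
    exact ⟨_, filter_mem_mem_words _ x, ⟨rfl, filter_mem_mem_words _ x⟩, rfl,
      filter_mem_mem_words _ x⟩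

theorem exists_merge_of_mem_twoChannelOutputs {u v : List α} {i1 i2 j1 : ℕ}
    (h : (u, v) ∈ twoChannelOutputs I1 I2 i1 i2 j1) :
    ∃ x : List α, (∀ c ∈ x, c ∈ I1 ∨ c ∈ I2) ∧ x.filter (· ∈ I1) = u ∧ x.filter (· ∈ I2) = v := by
  simp only [twoChannelOutputs, Set.mem_iUnion, Set.mem_prod] at h
  obtain ⟨w, ⟨-, hw⟩, hu, hv⟩ := h
  have hu1 : ∀ a ∈ u, a ∈ I1 := fun a ha => (mem_or_mem_of_mem_insertions hu ha).elim
    (fun h => (Finset.mem_inter.1 (hw a h)).1) fun h => (Finset.mem_sdiff.1 h).1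
  have hv2 : ∀ a ∈ v, a ∈ I2 := fun a ha => (mem_or_mem_of_mem_insertions hv ha).elim
    (fun h => (Finset.mem_inter.1 (hw a h)).2) fun h => (Finset.mem_sdiff.1 h).1
  obtain ⟨x, hx, hxu, hxv⟩ := exists_filter_eq_filter_eq (p := (· ∈ I1)) (q := (· ∈ I2))
    (by simpa using hu1) (by simpa using hv2)
    ((mem_insertions.1 hu).1.trans (mem_insertions.1 hv).1.symm)
  exact ⟨x, by simpa using hx, hxu, hxv⟩

theorem exists_of_mem_twoChannelOutputs [Fintype α] {u v : List α} {i1 i2 j1 j2 : ℕ}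
    (h : (u, v) ∈ twoChannelOutputs I1 I2 i1 i2 j1)
    (hL : j2 = 0 ∨ (Finset.univ \ (I1 ∪ I2)).Nonempty) :
    ∃ x : List α, x.length = j1 + j2 + i1 + i2 ∧
      x.countP (· ∈ I1 \ I2) = i1 ∧ x.countP (· ∈ I2 \ I1) = i2 ∧
      x.countP (· ∈ I1 ∩ I2) = j1 ∧ x.countP (· ∈ Finset.univ \ (I1 ∪ I2)) = j2 ∧
      x.filter (· ∈ I1) = u ∧ x.filter (· ∈ I2) = v := by
  obtain ⟨x, hx, rfl, rfl⟩ := exists_merge_of_mem_twoChannelOutputs h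
  obtain ⟨z, hzlen, hz⟩ := nonempty_words hL
  have hzI1 : z.filter (· ∈ I1) = [] := filter_eq_nil_iff.2 fun a ha => by
    simpa using (Finset.notMem_union.1 (Finset.mem_sdiff.1 (hz a ha)).2).1
  have hzI2 : z.filter (· ∈ I2) = [] := filter_eq_nil_iff.2 fun a ha => by
    simpa using (Finset.notMem_union.1 (Finset.mem_sdiff.1 (hz a ha)).2).2
  have hxz1 : (x ++ z).filter (· ∈ I1) = x.filter (· ∈ I1) := by
    rw [filter_append, hzI1, append_nil]
  have hxz2 : (x ++ z).filter (· ∈ I2) = x.filter (· ∈ I2) := by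
    rw [filter_append, hzI2, append_nil]
  obtain ⟨h1, h2, h3⟩ := (filter_pair_mem_twoChannelOutputs_iff (x ++ z)).1 (hxz1 ▸ hxz2 ▸ h)
  have h4 : (x ++ z).countP (· ∈ Finset.univ \ (I1 ∪ I2)) = j2 := by
    rw [countP_append, countP_eq_zero.2 fun a ha => by simpa [or_iff_not_imp_left] using hx a ha,
      countP_eq_length.2 fun a ha => by simpa using hz a ha, hzlen, zero_add]
  refine ⟨x ++ z, ?_, h1, h2, h3, h4, hxz1, hxz2⟩
  rw [length_eq_countP_venn I1 I2, h1, h2, h3, h4]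
  ring

end TwoChannels

theorem two_sets_count_general (q k p1 p2 n : ℕ)
    (I1 I2 : Finset (Fin q))
    (hK : (I1 ∩ I2).card = k) (hP1 : (I1 \ I2).card = p1) (hP2 : (I2 \ I1).card = p2)
    (i1 i2 j1 j2 : ℕ)
    (hsum : j1 + j2 + i1 + i2 = n)
    (hL : j2 = 0 ∨ (Finset.univ \ (I1 ∪ I2) : Finset (Fin q)).Nonempty) :
    Set.ncard { y : Fin 2 → List (Fin q) | ∃ x : List (Fin q), x.length = n ∧
        x.countP (fun a => a ∈ I1 \ I2) = i1 ∧
        x.countP (fun a => a ∈ I2 \ I1) = i2 ∧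
        x.countP (fun a => a ∈ I1 ∩ I2) = j1 ∧
        x.countP (fun a => a ∈ Finset.univ \ (I1 ∪ I2)) = j2 ∧
        y = fun ℓ => channelOutput (![I1, I2] ℓ) x }
      = k ^ j1 * p1 ^ i1 * p2 ^ i2 *
          Nat.choose (j1 + i1) i1 * Nat.choose (j1 + i2) i2 := by
  calc _ = (twoChannelOutputs I1 I2 i1 i2 j1).ncard := by
        rw [← Set.ncard_image_of_injective _ (finTwoArrowEquiv _).injective]
        congr 1
        ext ⟨u, v⟩
        constructor
        · rintro ⟨_, ⟨x, -, h1, h2, h3, -, rfl⟩, he⟩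
          obtain ⟨rfl, rfl⟩ := Prod.mk.inj he
          exact (filter_pair_mem_twoChannelOutputs_iff x).2 ⟨h1, h2, h3⟩
        · intro h
          obtain ⟨x, hlen, h1, h2, h3, h4, rfl, rfl⟩ := exists_of_mem_twoChannelOutputs h hL
          exact ⟨_, ⟨x, hlen.trans hsum, h1, h2, h3, h4, rfl⟩, rfl⟩
    _ = _ := by
        rw [ncard_twoChannelOutputs, hK, hP1, hP2]
        ring

/-- the exact count of output tuples of two intersecting coloring
channels over inputs with a prescribed composition. -/
theorem two_sets_count (q k p1 p2 n : ℕ) (hq : 2 ≤ q)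
    (hk : 1 ≤ k) (hp1 : 1 ≤ p1) (hp2 : 1 ≤ p2)
    (I1 I2 : Finset (Fin q))
    (hK : (I1 ∩ I2).card = k) (hP1 : (I1 \ I2).card = p1) (hP2 : (I2 \ I1).card = p2)
    (i1 i2 j1 j2 : ℕ)
    (hsum : j1 + j2 + i1 + i2 = n)
    (hL : j2 = 0 ∨ (Finset.univ \ (I1 ∪ I2) : Finset (Fin q)).Nonempty) :
    Set.ncard { y : Fin 2 → List (Fin q) | ∃ x : List (Fin q), x.length = n ∧
        x.countP (fun a => a ∈ I1 \ I2) = i1 ∧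
        x.countP (fun a => a ∈ I2 \ I1) = i2 ∧
        x.countP (fun a => a ∈ I1 ∩ I2) = j1 ∧
        x.countP (fun a => a ∈ Finset.univ \ (I1 ∪ I2)) = j2 ∧
        y = fun ℓ => channelOutput (![I1, I2] ℓ) x }
      = k ^ j1 * p1 ^ i1 * p2 ^ i2 *
          Nat.choose (j1 + i1) i1 * Nat.choose (j1 + i2) i2 :=
  two_sets_count_general q k p1 p2 n I1 I2 hK hP1 hP2 i1 i2 j1 j2 hsum hL
end

section
/- Let m ∈ (0,4) be real, and let λ_1 = (m + √(m²−4m))/2 and λ_2 = (m − √(m²−4m))/2 be the (possibly complex) roots of z² − m z + m = 0. Define r_0 = m − 1 and r_i = ((m−1) r_{i−1} − 1)/(r_{i−1} + 1) for i ≥ 1. Fix i ≥ 0 and assume λ_1^j ≠ λ_2^j for all 1 ≤ j ≤ i+1 (so that the recursion is well defined up to index i, i.e., r_{j−1} ≠ −1 for all 1 ≤ j ≤ i). Then r_i = (λ_1^{i+2} − λ_2^{i+2})/(λ_1^{i+1} − λ_2^{i+1}) − 1. -/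
theorem sq_cpow_one_div_two (z : ℂ) : (z ^ ((1 : ℂ) / 2)) ^ 2 = z := by
  simp [one_div]

section Field

variable {K : Type*} [Field K]

theorem add_eq_and_mul_eq_of_sq_eq_discrim [NeZero (2 : K)] {b c s : K}
    (hs : s ^ 2 = b ^ 2 - 4 * c) :
    (b + s) / 2 + (b - s) / 2 = b ∧ (b + s) / 2 * ((b - s) / 2) = c := by
  constructor
  · field_simp
    ring
  · field_simp
    linear_combination -hs

theorem mobius_step_div_sub_one (m : K) {A B C : K} (hA : A ≠ 0) (hB : B ≠ 0)
    (hC : C = m * A - m * B) :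
    ((m - 1) * (A / B - 1) - 1) / (A / B - 1 + 1) = C / A - 1 := by
  rw [sub_add_cancel]
  field_simp
  linear_combination -hC

theorem eq_div_sub_one_of_linear_recurrence {m : K} {r U : ℕ → K} (hr0 : r 0 = m - 1)
    (hrec : ∀ j, r (j + 1) = ((m - 1) * r j - 1) / (r j + 1))
    (hU0 : U 0 = 0) (hU : ∀ k, U (k + 2) = m * U (k + 1) - m * U k)
    {i : ℕ} (hUne : ∀ j, 1 ≤ j → j ≤ i + 1 → U j ≠ 0) :
    r i = U (i + 2) / U (i + 1) - 1 := by
  induction i with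
  | zero =>
    have hU1 : U 1 ≠ 0 := hUne 1 le_rfl le_rfl
    rw [hr0, hU, hU0, mul_zero, sub_zero, mul_div_cancel_right₀ _ hU1]
  | succ n ih =>
    rw [hrec, ih fun j h1 h2 => hUne j h1 (by omega)]
    exact mobius_step_div_sub_one m (hUne (n + 2) (by omega) le_rfl)
      (hUne (n + 1) (by omega) (by omega)) (hU (n + 1))

end Field

theorem pow_sub_pow_add_two {R : Type*} [CommRing R] (a b : R) (k : ℕ) :
    a ^ (k + 2) - b ^ (k + 2) = (a + b) * (a ^ (k + 1) - b ^ (k + 1)) - a * b * (a ^ k - b ^ k) := by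
  ring

theorem recursion_explicit_solution_general (m : ℝ)
    (lam1 lam2 : ℂ)
    (hlam1 : lam1 = ((m : ℂ) + ((m : ℂ) ^ 2 - 4 * (m : ℂ)) ^ ((1 : ℂ) / 2)) / 2)
    (hlam2 : lam2 = ((m : ℂ) - ((m : ℂ) ^ 2 - 4 * (m : ℂ)) ^ ((1 : ℂ) / 2)) / 2)
    (r : ℕ → ℝ) (hr0 : r 0 = m - 1)
    (hrec : ∀ j : ℕ, r (j + 1) = ((m - 1) * r j - 1) / (r j + 1))
    (i : ℕ)
    (hroots : ∀ j : ℕ, 1 ≤ j → j ≤ i + 1 → lam1 ^ j ≠ lam2 ^ j) :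
    (r i : ℂ) = (lam1 ^ (i + 2) - lam2 ^ (i + 2)) / (lam1 ^ (i + 1) - lam2 ^ (i + 1)) - 1 := by
  obtain ⟨hsum, hprod⟩ := add_eq_and_mul_eq_of_sq_eq_discrim (sq_cpow_one_div_two _)
  rw [← hlam1, ← hlam2] at hsum hprod
  refine eq_div_sub_one_of_linear_recurrence (m := (m : ℂ)) (r := fun k => (r k : ℂ))
    (U := fun k => lam1 ^ k - lam2 ^ k) (by simp [hr0]) (fun j => by simp [hrec])
    (by simp) (fun k => ?_) (fun j h1 h2 => sub_ne_zero.mpr (hroots j h1 h2))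
  simp only [pow_sub_pow_add_two, hsum, hprod]

/-- explicit solution of the continued-fraction recursion
`r_0 = m−1`, `r_i = ((m−1)r_{i−1} − 1)/(r_{i−1} + 1)`, in terms of the (possibly
complex) roots `λ₁, λ₂` of `z² − m z + m = 0`. -/
theorem recursion_explicit_solution (m : ℝ) (hm : m ∈ Set.Ioo (0 : ℝ) 4)
    (lam1 lam2 : ℂ)
    (hlam1 : lam1 = ((m : ℂ) + ((m : ℂ) ^ 2 - 4 * (m : ℂ)) ^ ((1 : ℂ) / 2)) / 2)
    (hlam2 : lam2 = ((m : ℂ) - ((m : ℂ) ^ 2 - 4 * (m : ℂ)) ^ ((1 : ℂ) / 2)) / 2)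
    (r : ℕ → ℝ) (hr0 : r 0 = m - 1)
    (hrec : ∀ j : ℕ, r (j + 1) = ((m - 1) * r j - 1) / (r j + 1))
    (i : ℕ)
    (hroots : ∀ j : ℕ, 1 ≤ j → j ≤ i + 1 → lam1 ^ j ≠ lam2 ^ j) :
    (r i : ℂ) = (lam1 ^ (i + 2) - lam2 ^ (i + 2)) / (lam1 ^ (i + 1) - lam2 ^ (i + 1)) - 1 :=
  recursion_explicit_solution_general m lam1 lam2 hlam1 hlam2 r hr0 hrec i hroots
end

section
/- Let m ∈ (0,4) be real, set u = (m−2)/2, define r_0 = m − 1 and r_i = ((m−1) r_{i−1} − 1)/(r_{i−1} + 1) for i ≥ 1, and assume the recursion is well defined (r_{j−1} ≠ −1 for every index j used). Then for all i ≥ 1 for which the relevant denominators are nonzero: r_{2i−1} = U_i(u) / U_{i−1}(u) and r_{2i} = W_{i+1}(u) / W_i(u), where U_ℓ is the Chebyshev polynomial of the second kind and W_ℓ(x) = U_ℓ(x) + U_{ℓ−1}(x) is the Chebyshev polynomial of the fourth kind. -/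
/-- The Chebyshev polynomial of the fourth kind, `W_ℓ = U_ℓ + U_{ℓ−1}`. -/
noncomputable def chebW (ℓ : ℤ) (x : ℝ) : ℝ :=
  (Polynomial.Chebyshev.U ℝ ℓ).eval x + (Polynomial.Chebyshev.U ℝ (ℓ - 1)).eval x

/-! The map `x ↦ ((m - 1) x - 1) / (x + 1)` acts on a ratio `P / Q` through the linear map
`(P, Q) ↦ ((m - 1) P - Q, P + Q)`. With `m = 2u + 2`, the three-term recurrence
`U_{n+1} + U_{n-1} = 2u U_n` shows that this linear map sends `(U_{n+1}, U_n)` to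
`(W_{n+2}, W_{n+1})` and `(W_{n+1}, W_n)` to `m (U_{n+1}, U_n)`. Since `r_0 = W_1 / W_0`, the
iterates alternate between the two kinds of ratio. The factor `m` cancels because
`r_0 = m - 1 ≠ -1`. -/

open Polynomial Polynomial.Chebyshev

theorem moebius_apply_div {K : Type*} [Field K] {a P Q : K} (hQ : Q ≠ 0) (h : P / Q + 1 ≠ 0) :
    P + Q ≠ 0 ∧ (a * (P / Q) - 1) / (P / Q + 1) = (a * P - Q) / (P + Q) := by
  have hPQ : P + Q ≠ 0 := by
    rwa [div_add_one hQ, div_ne_zero_iff, and_iff_left hQ] at h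
  refine ⟨hPQ, ?_⟩
  field_simp

section Chebyshev

variable (x : ℝ) (n : ℤ)

theorem U_eval_sub_one :
    (U ℝ (n - 1)).eval x = 2 * x * (U ℝ n).eval x - (U ℝ (n + 1)).eval x := by
  simp [U_sub_one]

theorem chebW_add_one : chebW (n + 1) x = (U ℝ (n + 1)).eval x + (U ℝ n).eval x := by
  simp [chebW]

theorem two_mul_add_one_mul_U_sub_U :
    (2 * x + 1) * (U ℝ (n + 1)).eval x - (U ℝ n).eval x = chebW (n + 2) x := by
  rw [chebW, show n + 2 - 1 = n + 1 by ring, U_add_two]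
  simp only [eval_sub, eval_mul, eval_ofNat, eval_X]
  ring

theorem two_mul_add_one_mul_chebW_sub_chebW :
    (2 * x + 1) * chebW (n + 1) x - chebW n x = (2 * x + 2) * (U ℝ (n + 1)).eval x := by
  rw [chebW_add_one, chebW, U_eval_sub_one]
  ring

theorem chebW_add_one_add_chebW :
    chebW (n + 1) x + chebW n x = (2 * x + 2) * (U ℝ n).eval x := by
  rw [chebW_add_one, chebW, U_eval_sub_one]
  ring

end Chebyshev

section Recursion

variable {m u : ℝ} {r : ℕ → ℝ} (hu : u = (m - 2) / 2)
  (hrec : ∀ j : ℕ, r (j + 1) = ((m - 1) * r j - 1) / (r j + 1))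
include hu hrec

theorem recursion_odd_of_even (hm : m ≠ 0) {k : ℕ} (hW : chebW k u ≠ 0)
    (heven : r (2 * k) = chebW (k + 1) u / chebW k u) (hwd : r (2 * k) ≠ -1) :
    (U ℝ k).eval u ≠ 0 ∧ r (2 * k + 1) = (U ℝ (k + 1)).eval u / (U ℝ k).eval u := by
  obtain ⟨hsum, hstep⟩ := moebius_apply_div (a := m - 1) hW
    (by rwa [← heven, Ne, add_eq_zero_iff_eq_neg])
  have hm2 : 2 * u + 2 = m := by rw [hu]; ring
  rw [chebW_add_one_add_chebW, hm2] at hsum hstep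
  refine ⟨right_ne_zero_of_mul hsum, ?_⟩
  rw [hrec, heven, hstep, show m - 1 = 2 * u + 1 by rw [hu]; ring,
    two_mul_add_one_mul_chebW_sub_chebW, hm2, mul_div_mul_left _ _ hm]

theorem recursion_even_succ_of_odd {k : ℕ} (hU : (U ℝ k).eval u ≠ 0)
    (hodd : r (2 * k + 1) = (U ℝ (k + 1)).eval u / (U ℝ k).eval u) (hwd : r (2 * k + 1) ≠ -1) :
    chebW (k + 1) u ≠ 0 ∧ r (2 * k + 2) = chebW (k + 2) u / chebW (k + 1) u := by
  obtain ⟨hsum, hstep⟩ := moebius_apply_div (a := m - 1) hU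
    (by rwa [← hodd, Ne, add_eq_zero_iff_eq_neg])
  rw [← chebW_add_one] at hsum hstep
  refine ⟨hsum, ?_⟩
  rw [hrec, hodd, hstep, show m - 1 = 2 * u + 1 by rw [hu]; ring, two_mul_add_one_mul_U_sub_U]

theorem recursion_even (hr0 : r 0 = m - 1) (hm : m ≠ 0) {n : ℕ} (hwd : ∀ j < n, r j ≠ -1) :
    ∀ k : ℕ, 2 * k ≤ n → chebW k u ≠ 0 ∧ r (2 * k) = chebW (k + 1) u / chebW k u
  | 0, _ => by
    have hW0 : chebW 0 u = 1 := by simp [chebW]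
    have hW1 : chebW 1 u = m - 1 := by simp [chebW, hu]; ring
    simp [hW0, hW1, hr0]
  | k + 1, hk => by
    obtain ⟨hW, heven⟩ := recursion_even hr0 hm hwd k (by omega)
    obtain ⟨hU, hodd⟩ := recursion_odd_of_even hu hrec hm hW heven (hwd _ (by omega))
    push_cast
    rw [add_assoc, one_add_one_eq_two]
    exact recursion_even_succ_of_odd hu hrec hU hodd (hwd _ (by omega))

end Recursion

theorem recursion_chebyshev_general (m : ℝ)
    (u : ℝ) (hu : u = (m - 2) / 2)
    (r : ℕ → ℝ) (hr0 : r 0 = m - 1)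
    (hrec : ∀ j : ℕ, r (j + 1) = ((m - 1) * r j - 1) / (r j + 1))
    (i : ℕ) (hi : 1 ≤ i)
    (hwd : ∀ j : ℕ, j < 2 * i → r j ≠ -1) :
    r (2 * i - 1) = (Polynomial.Chebyshev.U ℝ (i : ℤ)).eval u /
        (Polynomial.Chebyshev.U ℝ ((i : ℤ) - 1)).eval u ∧
    r (2 * i) = chebW ((i : ℤ) + 1) u / chebW (i : ℤ) u := by
  have hm : m ≠ 0 := fun h => hwd 0 (by omega) (by rw [hr0, h]; ring)
  obtain ⟨k, rfl⟩ := Nat.exists_eq_add_of_le' hi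
  obtain ⟨hW, heven⟩ := recursion_even hu hrec hr0 hm hwd k (by omega)
  obtain ⟨-, hodd⟩ := recursion_odd_of_even hu hrec hm hW heven (hwd _ (by omega))
  refine ⟨?_, (recursion_even hu hrec hr0 hm hwd (k + 1) le_rfl).2⟩
  rw [show 2 * (k + 1) - 1 = 2 * k + 1 by omega, hodd]
  push_cast
  rw [add_sub_cancel_right]

/-- the recursion `r_0 = m−1`, `r_i = ((m−1)r_{i−1} − 1)/(r_{i−1}+1)`
is expressed by ratios of Chebyshev polynomials of the second and fourth kinds at
`u = (m−2)/2`. -/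
theorem recursion_chebyshev (m : ℝ) (hm : m ∈ Set.Ioo (0 : ℝ) 4)
    (u : ℝ) (hu : u = (m - 2) / 2)
    (r : ℕ → ℝ) (hr0 : r 0 = m - 1)
    (hrec : ∀ j : ℕ, r (j + 1) = ((m - 1) * r j - 1) / (r j + 1))
    (i : ℕ) (hi : 1 ≤ i)
    (hwd : ∀ j : ℕ, j < 2 * i → r j ≠ -1)
    (hU : (Polynomial.Chebyshev.U ℝ ((i : ℤ) - 1)).eval u ≠ 0)
    (hW : chebW (i : ℤ) u ≠ 0) :
    r (2 * i - 1) = (Polynomial.Chebyshev.U ℝ (i : ℤ)).eval u /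
        (Polynomial.Chebyshev.U ℝ ((i : ℤ) - 1)).eval u ∧
    r (2 * i) = chebW ((i : ℤ) + 1) u / chebW (i : ℤ) u :=
  recursion_chebyshev_general m u hu r hr0 hrec i hi hwd
end

section
/- Fix an integer i ≥ 1 and let U_ℓ denote the Chebyshev polynomial of the second kind. For x ∈ (0,4) with x ≠ 1 and U_{i−1}((x−2)/2) ≠ 0, the equation U_i((x−2)/2) / U_{i−1}((x−2)/2) = 1/(x−1) holds if and only if x = 2 + 2cos( 2πk/(2i+3) ) for some integer k ∈ [1, i+1] with k ≠ (2i+3)/3 (this exclusion applying only when 3 divides i). -/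
/-!
Write `x = 2 + 2 cos θ` with `0 < θ < π`. The recurrence `U_{i+1} = 2X U_i - U_{i-1}` turns the
equation `U_i (1 + 2 cos θ) = U_{i-1}` into `U_i + U_{i+1} = 0` at `cos θ`, and by the
sum-to-product formula `(U_i + U_{i+1})(cos θ) sin θ = 2 sin ((2i+3)θ/2) cos (θ/2)`. So the
solutions are the zeros `θ = 2πk/(2i+3)` of the sine in `(0, π)`, except `θ = 2π/3`, which
gives `x = 1`.
-/

open Real Set

namespace Polynomial.Chebyshev

theorem U_eval_mul_one_add_two_mul_sub {R : Type*} [CommRing R] (n : ℤ) (c : R) :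
    (U R n).eval c * (1 + 2 * c) - (U R (n - 1)).eval c =
      (U R n).eval c + (U R (n + 1)).eval c := by
  rw [U_add_one]
  simp only [eval_sub, eval_mul, eval_ofNat, eval_X]
  ring

theorem U_real_cos_add_U_real_cos_mul_sin (θ : ℝ) (n : ℤ) :
    ((U ℝ n).eval (cos θ) + (U ℝ (n + 1)).eval (cos θ)) * sin θ =
      2 * sin ((2 * n + 3) * θ / 2) * cos (θ / 2) := by
  rw [add_mul, U_real_cos, U_real_cos, sin_add_sin, ← cos_neg]
  push_cast
  ring_nf

theorem U_real_cos_div_eq_one_div_iff {θ : ℝ} (hθ : θ ∈ Ioo 0 π) {n : ℤ}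
    (hU : (U ℝ (n - 1)).eval (cos θ) ≠ 0) (hc : 1 + 2 * cos θ ≠ 0) :
    (U ℝ n).eval (cos θ) / (U ℝ (n - 1)).eval (cos θ) = 1 / (1 + 2 * cos θ) ↔
      sin ((2 * n + 3) * θ / 2) = 0 := by
  have hsin : sin θ ≠ 0 := (sin_pos_of_pos_of_lt_pi hθ.1 hθ.2).ne'
  have hcos : cos (θ / 2) ≠ 0 :=
    (cos_pos_of_mem_Ioo ⟨by linarith [hθ.1, pi_pos], by linarith [hθ.2]⟩).ne'
  rw [div_eq_div_iff hU hc, one_mul, ← sub_eq_zero, U_eval_mul_one_add_two_mul_sub,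
    ← mul_left_inj' hsin, zero_mul, U_real_cos_add_U_real_cos_mul_sin]
  simp [hcos]

end Polynomial.Chebyshev

namespace Real

theorem sin_natCast_mul_div_two_eq_zero_iff {N : ℕ} (hN : 0 < N) {θ : ℝ}
    (hθ : θ ∈ Ioo 0 π) :
    sin (N * θ / 2) = 0 ↔ ∃ k : ℕ, 1 ≤ k ∧ 2 * k < N ∧ θ = 2 * π * k / N := by
  have hN' : (0 : ℝ) < N := by exact_mod_cast hN
  constructor
  · intro h
    obtain ⟨m, hm⟩ := sin_eq_zero_iff.mp h
    have hm0 : (0 : ℝ) < m := by nlinarith [pi_pos, hθ.1]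
    have hmN : (2 * m : ℝ) < N := by nlinarith [pi_pos, hθ.2]
    lift m to ℕ using (by exact_mod_cast hm0.le)
    refine ⟨m, by exact_mod_cast hm0, by exact_mod_cast hmN, ?_⟩
    field_simp
    push_cast at hm
    linarith
  · rintro ⟨k, -, -, rfl⟩
    rw [show N * (2 * π * k / N) / 2 = k * π by field_simp]
    exact sin_nat_mul_pi k

end Real

open Polynomial.Chebyshev

theorem chebyshev_U_ratio_roots_general (i : ℕ) (x : ℝ)
    (hx : x ∈ Set.Ioo (0 : ℝ) 4) (hx1 : x ≠ 1)
    (hU : (Polynomial.Chebyshev.U ℝ ((i : ℤ) - 1)).eval ((x - 2) / 2) ≠ 0) :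
    (Polynomial.Chebyshev.U ℝ (i : ℤ)).eval ((x - 2) / 2) /
        (Polynomial.Chebyshev.U ℝ ((i : ℤ) - 1)).eval ((x - 2) / 2) = 1 / (x - 1) ↔
      ∃ k : ℕ, 1 ≤ k ∧ k ≤ i + 1 ∧ 3 * k ≠ 2 * i + 3 ∧
        x = 2 + 2 * Real.cos (2 * Real.pi * k / (2 * i + 3)) := by
  obtain ⟨θ, hθ, rfl⟩ : ∃ θ ∈ Ioo 0 π, x = 2 + 2 * cos θ :=
    ⟨arccos ((x - 2) / 2),
      ⟨arccos_pos.2 (by linarith [hx.2]), arccos_lt_pi.2 (by linarith [hx.1])⟩,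
      by rw [cos_arccos] <;> linarith [hx.1, hx.2]⟩
  rw [show (2 + 2 * cos θ - 2) / 2 = cos θ by ring] at hU ⊢
  rw [show 2 + 2 * cos θ - 1 = 1 + 2 * cos θ by ring,
    U_real_cos_div_eq_one_div_iff hθ hU (by contrapose! hx1; linarith),
    show (2 * ((i : ℤ) : ℝ) + 3) = ((2 * i + 3 : ℕ) : ℝ) by push_cast; ring,
    sin_natCast_mul_div_two_eq_zero_iff (by omega) hθ]
  push_cast
  refine exists_congr fun k => ⟨?_, ?_⟩
  · rintro ⟨hk1, hk2, rfl⟩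
    refine ⟨hk1, by omega, fun h3 => hx1 ?_, rfl⟩
    have h3' : (2 * i + 3 : ℝ) = 3 * k := by exact_mod_cast h3.symm
    rw [h3', show 2 * π * k / (3 * k) = π - π / 3 by field_simp; ring, cos_pi_sub,
      cos_pi_div_three]
    ring
  · rintro ⟨hk1, hk2, -, hθk⟩
    have hk2' : (2 * k : ℝ) ≤ 2 * i + 3 := by exact_mod_cast (by omega : 2 * k ≤ 2 * i + 3)
    refine ⟨hk1, by omega,
      injOn_cos (Ioo_subset_Icc_self hθ) ⟨by positivity, ?_⟩ (by linarith)⟩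
    rw [div_le_iff₀ (by positivity)]
    nlinarith [pi_pos]

/-- solutions in `(0,4)` of `U_i((x−2)/2)/U_{i−1}((x−2)/2) = 1/(x−1)`,
where `U_ℓ` is the Chebyshev polynomial of the second kind.  The exclusion
`3k ≠ 2i+3` is only binding when `3 ∣ i`. -/
theorem chebyshev_U_ratio_roots (i : ℕ) (hi : 1 ≤ i) (x : ℝ)
    (hx : x ∈ Set.Ioo (0 : ℝ) 4) (hx1 : x ≠ 1)
    (hU : (Polynomial.Chebyshev.U ℝ ((i : ℤ) - 1)).eval ((x - 2) / 2) ≠ 0) :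
    (Polynomial.Chebyshev.U ℝ (i : ℤ)).eval ((x - 2) / 2) /
        (Polynomial.Chebyshev.U ℝ ((i : ℤ) - 1)).eval ((x - 2) / 2) = 1 / (x - 1) ↔
      ∃ k : ℕ, 1 ≤ k ∧ k ≤ i + 1 ∧ 3 * k ≠ 2 * i + 3 ∧
        x = 2 + 2 * Real.cos (2 * Real.pi * k / (2 * i + 3)) :=
  chebyshev_U_ratio_roots_general i x hx hx1 hU
end

section
/- Fix an integer i ≥ 1 and define W_ℓ(x) = U_ℓ(x) + U_{ℓ−1}(x), where U_ℓ is the Chebyshev polynomial of the second kind. For x ∈ (0,4) with x ≠ 1 and W_{i−1}((x−2)/2) ≠ 0, the equation W_i((x−2)/2) / W_{i−1}((x−2)/2) = 1/(x−1) holds if and only if x = 2 + 2cos( 2πk/(2i+2) ) for some integer k ∈ [1, i] with k ≠ 2(i+1)/3 (this exclusion applying only when 3 divides i+1). -/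
/-!
Put `(x - 2) / 2 = cos θ` with `0 < θ < π`. Since `W_n(cos θ) sin θ = sin((n+1)θ) + sin(nθ)`,
the addition formulas give
`(W_n(c)(1 + 2c) - W_{n-1}(c)) sin θ = 2 sin((n+1)θ)(1 + cos θ)` at `c = cos θ`,
and `1 + 2c = x - 1`; so the equation holds iff `sin((i+1)θ) = 0`, i.e. `θ = kπ/(i+1)` with
`1 ≤ k ≤ i`. The excluded value `3k = 2(i+1)` is `θ = 2π/3`, where `x = 1`.
-/

open Real Set

lemma chebW_cos_mul_sin (n : ℤ) (θ : ℝ) :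
    chebW n (cos θ) * sin θ = sin ((n + 1) * θ) + sin (n * θ) := by
  have h := Polynomial.Chebyshev.U_real_cos θ (n - 1)
  push_cast at h
  rw [chebW, add_mul, Polynomial.Chebyshev.U_real_cos, h, sub_add_cancel]

lemma chebW_defect_cos_mul_sin (n : ℤ) (θ : ℝ) :
    (chebW n (cos θ) * (1 + 2 * cos θ) - chebW (n - 1) (cos θ)) * sin θ
      = 2 * sin ((n + 1) * θ) * (1 + cos θ) := by
  have hn := chebW_cos_mul_sin n θ
  have hn1 := chebW_cos_mul_sin (n - 1) θ
  push_cast at hn1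
  have e1 : sin (n * θ) = sin ((n + 1) * θ - θ) := by ring_nf
  have e2 : sin ((n - 1) * θ) = sin ((n + 1) * θ - 2 * θ) := by ring_nf
  rw [sub_add_cancel, e2, sin_sub, cos_two_mul, sin_two_mul] at hn1
  rw [e1, sin_sub] at hn hn1
  linear_combination (1 + 2 * cos θ) * hn - hn1

lemma chebW_div_eq_iff_sin_eq_zero (n : ℤ) {θ : ℝ} (hθ : θ ∈ Ioo 0 π)
    (hW : chebW (n - 1) (cos θ) ≠ 0) (hc : 1 + 2 * cos θ ≠ 0) :
    chebW n (cos θ) / chebW (n - 1) (cos θ) = 1 / (1 + 2 * cos θ) ↔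
      sin ((n + 1) * θ) = 0 := by
  have hsin : sin θ ≠ 0 := (sin_pos_of_pos_of_lt_pi hθ.1 hθ.2).ne'
  have hcos : 1 + cos θ ≠ 0 := by
    have := cos_lt_cos_of_nonneg_of_le_pi hθ.1.le le_rfl hθ.2
    rw [cos_pi] at this
    linarith
  rw [div_eq_div_iff hW hc, one_mul, ← sub_eq_zero, ← mul_left_inj' hsin, zero_mul,
    chebW_defect_cos_mul_sin]
  simp [hcos]

lemma sin_nat_succ_mul_eq_zero_iff (n : ℕ) {θ : ℝ} (hθ : θ ∈ Ioo 0 π) :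
    sin ((n + 1) * θ) = 0 ↔ ∃ k : ℕ, 1 ≤ k ∧ k ≤ n ∧ θ = k * π / (n + 1) := by
  have hn : (0 : ℝ) < n + 1 := by positivity
  constructor
  · intro h
    obtain ⟨m, hm⟩ := sin_eq_zero_iff.1 h
    have hm0 : (0 : ℝ) < m := by nlinarith [hθ.1, pi_pos]
    have hmn : (m : ℝ) < n + 1 := by nlinarith [hθ.2, pi_pos]
    lift m to ℕ using by exact_mod_cast hm0.le
    push_cast at hm hm0 hmn
    have hmn' : m < n + 1 := by exact_mod_cast hmn
    refine ⟨m, by exact_mod_cast hm0, Nat.lt_succ_iff.1 hmn', ?_⟩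
    field_simp
    linarith
  · rintro ⟨k, -, -, rfl⟩
    rw [mul_div_cancel₀ _ hn.ne', sin_nat_mul_pi]

theorem chebyshev_W_ratio_roots_general (i : ℕ) (x : ℝ)
    (hx : x ∈ Set.Ioo (0 : ℝ) 4) (hx1 : x ≠ 1)
    (hW : chebW ((i : ℤ) - 1) ((x - 2) / 2) ≠ 0) :
    chebW (i : ℤ) ((x - 2) / 2) / chebW ((i : ℤ) - 1) ((x - 2) / 2) = 1 / (x - 1) ↔
      ∃ k : ℕ, 1 ≤ k ∧ k ≤ i ∧ 3 * k ≠ 2 * (i + 1) ∧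
        x = 2 + 2 * Real.cos (2 * Real.pi * k / (2 * i + 2)) := by
  obtain ⟨θ, hθ, hcos⟩ : ∃ θ ∈ Ioo 0 π, cos θ = (x - 2) / 2 :=
    ⟨arccos _, ⟨arccos_pos.2 (by linarith [hx.2]), arccos_lt_pi.2 (by linarith [hx.1])⟩,
      cos_arccos (by linarith [hx.1]) (by linarith [hx.2])⟩
  obtain rfl : x = 2 + 2 * cos θ := by linarith
  rw [show (2 + 2 * cos θ - 2) / 2 = cos θ by ring] at hW ⊢
  rw [show 2 + 2 * cos θ - 1 = 1 + 2 * cos θ by ring,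
    chebW_div_eq_iff_sin_eq_zero _ hθ hW (by contrapose! hx1; linarith)]
  push_cast
  rw [sin_nat_succ_mul_eq_zero_iff i hθ]
  refine exists_congr fun k => and_congr_right fun _ => and_congr_right fun hki => ?_
  have hi : (0 : ℝ) < i + 1 := by positivity
  rw [show 2 * π * k / (2 * i + 2) = k * π / (i + 1) by field_simp]
  constructor
  · rintro rfl
    refine ⟨fun h3 => hx1 ?_, rfl⟩
    have h3 : (3 : ℝ) * k = 2 * (i + 1) := by exact_mod_cast h3
    rw [show k * π / (i + 1) = π - π / 3 by field_simp; linarith, cos_pi_sub, cos_pi_div_three]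
    ring
  · rintro ⟨-, h⟩
    have hk : (k : ℝ) ≤ i := by exact_mod_cast hki
    refine injOn_cos ⟨hθ.1.le, hθ.2.le⟩ ⟨by positivity, ?_⟩ (by linarith)
    rw [div_le_iff₀ hi]
    nlinarith [pi_pos]

/-- solutions in `(0,4)` of `W_i((x−2)/2)/W_{i−1}((x−2)/2) = 1/(x−1)`,
where `W_ℓ` is the Chebyshev polynomial of the fourth kind.  The exclusion
`3k ≠ 2(i+1)` is only binding when `3 ∣ (i+1)`. -/
theorem chebyshev_W_ratio_roots (i : ℕ) (hi : 1 ≤ i) (x : ℝ)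
    (hx : x ∈ Set.Ioo (0 : ℝ) 4) (hx1 : x ≠ 1)
    (hW : chebW ((i : ℤ) - 1) ((x - 2) / 2) ≠ 0) :
    chebW (i : ℤ) ((x - 2) / 2) / chebW ((i : ℤ) - 1) ((x - 2) / 2) = 1 / (x - 1) ↔
      ∃ k : ℕ, 1 ≤ k ∧ k ≤ i ∧ 3 * k ≠ 2 * (i + 1) ∧
        x = 2 + 2 * Real.cos (2 * Real.pi * k / (2 * i + 2)) :=
  chebyshev_W_ratio_roots_general i x hx hx1 hW
end

section
/- Let 𝓘 = (I_1,…,I_t) be a path of length t over Σ = [q], with I_i = {σ_{i−1}, σ_i} for distinct letters σ_0,…,σ_t ∈ Σ, and let L = Σ \ {σ_0,…,σ_t}. Let a_0,…,a_t, b ≥ 0 be integers with b + Σ_{i=0}^{t} a_i = n, and assume b = 0 or L ≠ ∅. Let A^{a_0,…,a_t,b} be the set of x ∈ Σ^n containing exactly a_i entries equal to σ_i for each 0 ≤ i ≤ t and exactly b entries from L, and let A_𝓘^{a_0,…,a_t,b} = { x_𝓘 : x ∈ A^{a_0,…,a_t,b} }. Then |A_𝓘^{a_0,…,a_t,b}|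 = ∏_{i=1}^{t} C(a_{i−1} + a_i, a_i). -/
/-!
The output tuple of `x` consists of one word `w i` over `{σ i, σ (i+1)}` per channel, containing
exactly `a i` letters `σ i` and `a (i+1)` letters `σ (i+1)`. Conversely every such tuple arises:
consecutive words `w i`, `w (i+1)` share only the letter `σ (i+1)`, and on it both reduce to the
same block `σ (i+1) ^ a (i+1)`, so they can be interleaved into one word realizing both; going
along the path builds an input over `{σ 0, …, σ t}`, padded with `b` letters from `L`.
Hence the output set is a product of sets of two-letter words, of sizes `C(a i + a (i+1), a (i+1))`.
-/

open List Finset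

namespace List

variable {α : Type*}

theorem exists_filter_eq_and_filter_eq {p r : α → Bool} :
    ∀ {x w : List α}, (∀ c ∈ x, p c) → (∀ c ∈ w, r c) → x.filter r = w.filter p →
      ∃ z : List α, z.filter p = x ∧ z.filter r = w ∧ ∀ c ∈ z, p c ∨ r c
  | [], w, _, hw, h => ⟨w, by simp [← h], filter_eq_self.2 hw, fun c hc => .inr (hw c hc)⟩
  | c :: x, w, hx, hw, h => by
    have hpc : p c := hx c mem_cons_self
    have hx' : ∀ d ∈ x, p d := fun d hd => hx d (mem_cons_of_mem c hd)
    by_cases hrc : r c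
    · induction w with
      | nil => simp [hrc] at h
      | cons d w ih =>
        have hrd : r d := hw d mem_cons_self
        have hw' : ∀ e ∈ w, r e := fun e he => hw e (mem_cons_of_mem d he)
        by_cases hpd : p d
        · obtain ⟨rfl, h'⟩ : c = d ∧ x.filter r = w.filter p := by simpa [hrc, hpd] using h
          obtain ⟨z, hzp, hzr, hz⟩ := exists_filter_eq_and_filter_eq hx' hw' h'
          exact ⟨c :: z, by simp [hpc, hzp], by simp [hrc, hzr],
            by simpa [hpc] using hz⟩
        · obtain ⟨z, hzp, hzr, hz⟩ := ih hw' (by simpa [hpd] using h)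
          exact ⟨d :: z, by simp [hpd, hzp], by simp [hrd, hzr], by simpa [hrd] using hz⟩
    · obtain ⟨z, hzp, hzr, hz⟩ := exists_filter_eq_and_filter_eq hx' hw (by simpa [hrc] using h)
      exact ⟨c :: z, by simp [hpc, hzp], by simp [hrc, hzr], by simpa [hpc] using hz⟩

theorem filter_filter_of_imp {p q : α → Bool} (h : ∀ c, q c → p c) (l : List α) :
    (l.filter p).filter q = l.filter q := by
  rw [List.filter_filter]
  exact List.filter_congr fun c _ => by cases hq : q c <;> simp [hq, h c]

end List

section

variable {α : Type*} [DecidableEq α]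

def twoLetterWords (u v : α) (A B : ℕ) : Finset (List α) :=
  (replicate A u ++ replicate B v).permutations.toFinset

theorem mem_twoLetterWords {u v : α} (huv : u ≠ v) {A B : ℕ} {w : List α} :
    w ∈ twoLetterWords u v A B ↔ w.count u = A ∧ w.count v = B ∧ w ⊆ [u, v] := by
  rw [twoLetterWords, mem_toFinset, mem_permutations, perm_replicate_append_replicate huv]

theorem twoLetterWords_zero_left (u v : α) (B : ℕ) :
    twoLetterWords u v 0 B = {replicate B v} := by
  ext w
  simp [twoLetterWords, perm_replicate]

theorem twoLetterWords_zero_right (u v : α) (A : ℕ) :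
    twoLetterWords u v A 0 = {replicate A u} := by
  ext w
  simp [twoLetterWords, perm_replicate]

theorem twoLetterWords_succ_succ {u v : α} (huv : u ≠ v) (A B : ℕ) :
    twoLetterWords u v (A + 1) (B + 1) =
      (twoLetterWords u v A (B + 1)).image (u :: ·) ∪
        (twoLetterWords u v (A + 1) B).image (v :: ·) := by
  ext w
  rcases w with _ | ⟨c, w⟩
  · simp [mem_twoLetterWords huv]
  · by_cases hc : c = u ∨ c = v
    · rcases hc with rfl | rfl <;> simp [mem_twoLetterWords huv, huv, huv.symm, List.cons_subset]
    · obtain ⟨hu, hv⟩ := not_or.1 hc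
      simp [mem_twoLetterWords huv, hu, hv, Ne.symm hu, Ne.symm hv, List.cons_subset]

theorem card_twoLetterWords {u v : α} (huv : u ≠ v) :
    ∀ A B, #(twoLetterWords u v A B) = (A + B).choose B
  | 0, B => by simp [twoLetterWords_zero_left]
  | A + 1, 0 => by simp [twoLetterWords_zero_right]
  | A + 1, B + 1 => by
    have hdisj : Disjoint ((twoLetterWords u v A (B + 1)).image (u :: ·))
        ((twoLetterWords u v (A + 1) B).image (v :: ·)) := by
      simp [Finset.disjoint_left, huv.symm]
    rw [twoLetterWords_succ_succ huv, card_union_of_disjoint hdisj,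
      card_image_of_injective _ cons_injective, card_image_of_injective _ cons_injective,
      card_twoLetterWords huv A (B + 1), card_twoLetterWords huv (A + 1) B,
      show A + 1 + (B + 1) = (A + 1 + B) + 1 by ring, Nat.choose_succ_succ', add_comm,
      show A + (B + 1) = A + 1 + B by ring]

theorem mem_of_mem_twoLetterWords {u v : α} {A B : ℕ} {w : List α}
    (hw : w ∈ twoLetterWords u v A B) {c : α} (hc : c ∈ w) : c = u ∨ c = v := by
  rw [twoLetterWords, mem_toFinset, mem_permutations] at hw
  have := hw.subset hc
  simp only [mem_append, mem_replicate] at this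
  exact this.imp And.right And.right

theorem filter_eq_replicate_of_mem_twoLetterWords {u v : α} {A B : ℕ} {w : List α}
    (hw : w ∈ twoLetterWords u v A B) {p : α → Bool} (hu : p u) (hv : ¬p v) :
    w.filter p = replicate A u := by
  rw [twoLetterWords, mem_toFinset, mem_permutations] at hw
  simpa [hu, hv, perm_replicate] using hw.filter p

theorem filter_mem_twoLetterWords {u v : α} (huv : u ≠ v) (x : List α) :
    x.filter (· ∈ ({u, v} : Finset α)) ∈ twoLetterWords u v (x.count u) (x.count v) := by
  rw [mem_twoLetterWords huv]
  exact ⟨count_filter (by simp), count_filter (by simp),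
    fun c hc => by simpa using (mem_filter.1 hc).2⟩

theorem filter_mem_pair_eq_replicate {u v : α} {x : List α} (hv : v ∉ x) :
    x.filter (· ∈ ({u, v} : Finset α)) = replicate (x.count u) u := by
  rw [← List.filter_eq]
  exact List.filter_congr fun c hc => by simp [show c ≠ v from fun h => hv (h ▸ hc)]

theorem List.length_eq_sum_count_of_forall_mem_range {ι : Type*} [Fintype ι] {σ : ι → α}
    (hσ : Function.Injective σ) {x : List α} (hx : ∀ c ∈ x, ∃ i, σ i = c) :
    x.length = ∑ i, x.count (σ i) := by
  have := Multiset.sum_count_eq_card (s := univ.image σ) (m := (x : Multiset α))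
    (fun c hc => by simpa [eq_comm] using hx c hc)
  rw [sum_image hσ.injOn] at this
  simpa using this.symm

theorem exists_list_filter_eq_of_forall_mem_twoLetterWords {t : ℕ} (σ : Fin (t + 1) → α)
    (hσ : Function.Injective σ) (a : Fin (t + 1) → ℕ) (w : Fin t → List α)
    (hw : ∀ i, w i ∈ twoLetterWords (σ i.castSucc) (σ i.succ) (a i.castSucc) (a i.succ)) :
    ∃ x : List α, (∀ c ∈ x, ∃ i, σ i = c) ∧ (∀ i, x.count (σ i) = a i) ∧
      ∀ i, x.filter (· ∈ ({σ i.castSucc, σ i.succ} : Finset α)) = w i := by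
  induction t with
  | zero =>
    refine ⟨replicate (a 0) (σ 0), by simp, fun i => ?_, fun i => i.elim0⟩
    rw [Fin.fin_one_eq_zero i, count_replicate_self]
  | succ t ih =>
    obtain ⟨x, hxσ, hxa, hxw⟩ := ih (σ ∘ Fin.castSucc) (hσ.comp (Fin.castSucc_injective _))
      (a ∘ Fin.castSucc) (fun i => w i.castSucc) fun i => by
        simpa only [Function.comp_apply, Fin.succ_castSucc] using hw i.castSucc
    simp only [Function.comp_apply] at hxσ hxa hxw
    set u := σ (Fin.last t).castSucc
    set v := σ (Fin.last (t + 1))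
    set p : α → Bool := fun c => decide (∃ j, σ (Fin.castSucc j) = c)
    set r : α → Bool := fun c => decide (c ∈ ({u, v} : Finset α))
    have hv : ∀ j : Fin (t + 1), σ j.castSucc ≠ v := fun j h =>
      (Fin.castSucc_lt_last j).ne (hσ h)
    have hxr : x.filter r = replicate (a (Fin.last t).castSucc) u := by
      rw [← hxa (Fin.last t)]
      refine filter_mem_pair_eq_replicate fun hvx => ?_
      obtain ⟨j, hj⟩ := hxσ v hvx
      exact hv j hj
    have hwx : (w (Fin.last t)).filter p = replicate (a (Fin.last t).castSucc) u :=
      filter_eq_replicate_of_mem_twoLetterWords (hw (Fin.last t)) (by simp [p])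
        (by simpa [p] using hv)
    obtain ⟨z, hzp, hzr, hz⟩ := List.exists_filter_eq_and_filter_eq (p := p) (r := r)
      (x := x) (w := w (Fin.last t)) (fun c hc => by simpa [p] using hxσ c hc)
      (fun c hc => by simpa [r, u, v] using mem_of_mem_twoLetterWords (hw (Fin.last t)) hc)
      (hxr.trans hwx.symm)
    obtain ⟨-, hwv, -⟩ := (mem_twoLetterWords (hv (Fin.last t))).1 (hw (Fin.last t))
    refine ⟨z, fun c hc => ?_, Fin.lastCases ?_ fun j => ?_, Fin.lastCases ?_ fun j => ?_⟩
    · obtain ⟨j, rfl⟩ | rfl | rfl : (∃ j : Fin (t + 1), σ j.castSucc = c) ∨ c = u ∨ c = v := by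
        simpa [p, r] using hz c hc
      all_goals exact ⟨_, rfl⟩
    · rw [← count_filter (p := r) (by simp [r, v]), hzr]
      simpa using hwv
    · rw [← count_filter (p := p) (by simp [p]), hzp, hxa]
    · simpa only [Fin.succ_last] using hzr
    · rw [← hxw j, ← hzp, Fin.succ_castSucc, filter_filter_of_imp]
      simp only [Finset.mem_insert, Finset.mem_singleton, decide_eq_true_eq, p]
      rintro c (rfl | rfl) <;> exact ⟨_, rfl⟩

end

theorem exists_input_of_forall_mem_twoLetterWords {q t n : ℕ} {σ : Fin (t + 1) → Fin q}
    (hσ : Function.Injective σ) {𝓘 : Fin t → Finset (Fin q)}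
    (h𝓘 : ∀ i : Fin t, 𝓘 i = {σ i.castSucc, σ i.succ}) {a : Fin (t + 1) → ℕ} {b : ℕ}
    (hsum : b + ∑ i, a i = n) (hL : b = 0 ∨ (univ \ univ.image σ : Finset (Fin q)).Nonempty)
    {y : Fin t → List (Fin q)}
    (hy : ∀ i, y i ∈ twoLetterWords (σ i.castSucc) (σ i.succ) (a i.castSucc) (a i.succ)) :
    ∃ x : List (Fin q), x.length = n ∧ (∀ i, x.count (σ i) = a i) ∧
      x.countP (fun c => c ∈ univ \ univ.image σ) = b ∧ y = fun i => channelOutput (𝓘 i) x := by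
  obtain ⟨x, hxσ, hxa, hxy⟩ := exists_list_filter_eq_of_forall_mem_twoLetterWords σ hσ a y hy
  obtain ⟨f, hfb, hfL⟩ : ∃ f : List (Fin q), f.length = b ∧ ∀ c ∈ f, ∀ i, c ≠ σ i := by
    rcases hL with rfl | ⟨ℓ, hℓ⟩
    · exact ⟨[], rfl, by simp⟩
    · refine ⟨replicate b ℓ, length_replicate, fun c hc i hi => ?_⟩
      rw [eq_of_mem_replicate hc] at hi
      simp [hi] at hℓ
  refine ⟨x ++ f, ?_, fun i => ?_, ?_, ?_⟩
  · rw [length_append, length_eq_sum_count_of_forall_mem_range hσ hxσ, hfb]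
    simp only [hxa]
    omega
  · rw [count_append, hxa, count_eq_zero.2 fun hi => hfL _ hi i rfl, add_zero]
  · rw [countP_append, countP_eq_zero.2, countP_eq_length.2, hfb, zero_add]
    · intro c hc
      simpa [eq_comm] using hfL c hc
    · intro c hc
      obtain ⟨i, rfl⟩ := hxσ c hc
      simp
  · funext i
    rw [channelOutput, filter_append, h𝓘 i, hxy i, filter_eq_nil_iff.2, append_nil]
    intro c hc
    simp [hfL c hc]

theorem path_count_general (q t n : ℕ)
    (σ : Fin (t + 1) → Fin q) (hσ : Function.Injective σ)
    (𝓘 : Fin t → Finset (Fin q))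
    (h𝓘 : ∀ i : Fin t, 𝓘 i = {σ i.castSucc, σ i.succ})
    (a : Fin (t + 1) → ℕ) (b : ℕ)
    (hsum : b + ∑ i, a i = n)
    (hL : b = 0 ∨ (Finset.univ \ Finset.univ.image σ : Finset (Fin q)).Nonempty) :
    Set.ncard { y : Fin t → List (Fin q) | ∃ x : List (Fin q), x.length = n ∧
        (∀ i : Fin (t + 1), x.count (σ i) = a i) ∧
        x.countP (fun c => c ∈ Finset.univ \ Finset.univ.image σ) = b ∧
        y = fun i => channelOutput (𝓘 i) x }
      = ∏ i : Fin t, Nat.choose (a i.castSucc + a i.succ) (a i.succ) := by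
  have huv : ∀ i : Fin t, σ i.castSucc ≠ σ i.succ := fun i h => Fin.castSucc_lt_succ.ne (hσ h)
  rw [← prod_congr rfl fun i _ => card_twoLetterWords (huv i) _ _, ← Fintype.card_piFinset,
    ← Set.ncard_coe_finset]
  congr 1
  ext y
  simp only [Set.mem_ofPred_eq, mem_coe, Fintype.mem_piFinset]
  refine ⟨?_, exists_input_of_forall_mem_twoLetterWords hσ h𝓘 hsum hL⟩
  rintro ⟨x, -, hxa, -, rfl⟩ i
  simpa [channelOutput, h𝓘, hxa] using filter_mem_twoLetterWords (huv i) x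

/-- the exact count of output tuples of a path of coloring
channels over inputs with prescribed letter counts. -/
theorem path_count (q t n : ℕ) (hq : 2 ≤ q)
    (σ : Fin (t + 1) → Fin q) (hσ : Function.Injective σ)
    (𝓘 : Fin t → Finset (Fin q))
    (h𝓘 : ∀ i : Fin t, 𝓘 i = {σ i.castSucc, σ i.succ})
    (a : Fin (t + 1) → ℕ) (b : ℕ)
    (hsum : b + ∑ i, a i = n)
    (hL : b = 0 ∨ (Finset.univ \ Finset.univ.image σ : Finset (Fin q)).Nonempty) :
    Set.ncard { y : Fin t → List (Fin q) | ∃ x : List (Fin q), x.length = n ∧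
        (∀ i : Fin (t + 1), x.count (σ i) = a i) ∧
        x.countP (fun c => c ∈ Finset.univ \ Finset.univ.image σ) = b ∧
        y = fun i => channelOutput (𝓘 i) x }
      = ∏ i : Fin t, Nat.choose (a i.castSucc + a i.succ) (a i.succ) :=
  path_count_general q t n σ hσ 𝓘 h𝓘 a b hsum hL
end
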